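/- arXiv:1802.05704 — 3 statements merged into one kernel-verified Lean document; each statement's English description precedes it below -/
import Mathlib

section
/- Let φ_λ : ℝⁿ × ℝ → ℝⁿ, λ ∈ [0,1], be a parametrized family of dissipative flows. Then the family is polar if and only if for every continuation (K_λ)_{λ∈[0,λ₁]} of the global attractor K_0 of φ_0 there exists λ₀ > 0 such that K_λ is not a global attractor of φ_λ for every λ with 0 < λ < λ₀. -/
open Set Metric Filter Topology Bornology

section Defs

variable {M : Type*} [TopologicalSpace M]

/-- A (continuous) flow on a topological space. -/
def IsFlow (φ : M → ℝ → M) : Prop :=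
  Continuous (fun p : M × ℝ => φ p.1 p.2) ∧
    (∀ x, φ x 0 = x) ∧ ∀ x s t, φ (φ x s) t = φ x (s + t)

/-- A set `S` is invariant for the flow `φ` if `φ(S,t) = S` for every `t`. -/
def FlowInvariant (φ : M → ℝ → M) (S : Set M) : Prop :=
  ∀ t : ℝ, (fun x => φ x t) '' S = S

/-- The omega-limit set `ω(x) = ⋂_{t>0} cl (φ(x,[t,∞)))`. -/
def omegaLimitSet (φ : M → ℝ → M) (x : M) : Set M :=
  ⋂ t ∈ Ioi (0 : ℝ), closure (φ x '' Ici t)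

/-- The negative omega-limit set `ω*(x) = ⋂_{t<0} cl (φ(x,(-∞,t]))`. -/
def negOmegaLimitSet (φ : M → ℝ → M) (x : M) : Set M :=
  ⋂ t ∈ Iio (0 : ℝ), closure (φ x '' Iic t)

/-- A flow is dissipative if every omega-limit set is nonempty and the closure of the
union of all omega-limit sets is compact. -/
def Dissipative (φ : M → ℝ → M) : Prop :=
  (∀ x, (omegaLimitSet φ x).Nonempty) ∧
    IsCompact (closure (⋃ x, omegaLimitSet φ x))

/-- `K` is stable: every neighborhood `U` of `K` contains a neighborhood `V` of `K`
with `φ(V,[0,∞)) ⊆ U`. -/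
def FlowStable (φ : M → ℝ → M) (K : Set M) : Prop :=
  ∀ U ∈ nhdsSet K, ∃ V ∈ nhdsSet K, ∀ x ∈ V, ∀ t : ℝ, 0 ≤ t → φ x t ∈ U

/-- `K` is negatively stable: every neighborhood `U` of `K` contains a neighborhood `V`
of `K` with `φ(V,(-∞,0]) ⊆ U`. -/
def FlowNegStable (φ : M → ℝ → M) (K : Set M) : Prop :=
  ∀ U ∈ nhdsSet K, ∃ V ∈ nhdsSet K, ∀ x ∈ V, ∀ t : ℝ, t ≤ 0 → φ x t ∈ U

/-- The region of attraction `A(K) = {x : ∅ ≠ ω(x) ⊆ K}`. -/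
def attractionRegion (φ : M → ℝ → M) (K : Set M) : Set M :=
  {x | (omegaLimitSet φ x).Nonempty ∧ omegaLimitSet φ x ⊆ K}

/-- The region of repulsion `R(K) = {x : ∅ ≠ ω*(x) ⊆ K}`. -/
def repulsionRegion (φ : M → ℝ → M) (K : Set M) : Set M :=
  {x | (negOmegaLimitSet φ x).Nonempty ∧ negOmegaLimitSet φ x ⊆ K}

/-- An attractor: a compact invariant stable set which is attracting, i.e. its region of
attraction is a neighborhood of it. -/
def IsAttractor (φ : M → ℝ → M) (K : Set M) : Prop :=
  IsCompact K ∧ FlowInvariant φ K ∧ FlowStable φ K ∧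
    attractionRegion φ K ∈ nhdsSet K

/-- A repeller: a compact invariant negatively stable set which is repelling. -/
def IsRepeller (φ : M → ℝ → M) (K : Set M) : Prop :=
  IsCompact K ∧ FlowInvariant φ K ∧ FlowNegStable φ K ∧
    repulsionRegion φ K ∈ nhdsSet K

/-- A global attractor: a compact invariant stable set whose region of attraction is the
whole space. -/
def IsGlobalAttractor (φ : M → ℝ → M) (K : Set M) : Prop :=
  IsCompact K ∧ FlowInvariant φ K ∧ FlowStable φ K ∧
    attractionRegion φ K = univ

/-- `N` is an isolating neighborhood of `K`: a compact neighborhood of `K` such that `K`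
is the maximal invariant set contained in `N`. -/
def IsIsolatingNbhd (φ : M → ℝ → M) (N K : Set M) : Prop :=
  IsCompact N ∧ K ⊆ interior N ∧ FlowInvariant φ K ∧
    ∀ S : Set M, FlowInvariant φ S → S ⊆ N → S ⊆ K

/-- An isolated invariant set: a compact invariant set having an isolating neighborhood. -/
def IsIsolatedInvariant (φ : M → ℝ → M) (K : Set M) : Prop :=
  IsCompact K ∧ FlowInvariant φ K ∧ ∃ N, IsIsolatingNbhd φ N K

/-- A parametrized family of flows `(φ_λ)_{λ ∈ [0,1]}`: jointly continuous on
`[0,1] × M × ℝ` and each `φ_λ` is a flow. -/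
def IsParamFlow (φ : ℝ → M → ℝ → M) : Prop :=
  ContinuousOn (fun p : ℝ × M × ℝ => φ p.1 p.2.1 p.2.2)
      ((Icc 0 1 : Set ℝ) ×ˢ (univ : Set (M × ℝ))) ∧
    ∀ l ∈ Icc (0 : ℝ) 1, IsFlow (φ l)

/-- `(K_λ)_{λ ∈ J}` is a continuation: each `K_λ` is an isolated invariant set of `φ_λ`
and every isolating neighborhood of `K_{λ₀}` remains an isolating neighborhood of `K_λ`
for `λ` near `λ₀` in `J`. -/
def IsContinuation (φ : ℝ → M → ℝ → M) (J : Set ℝ) (K : ℝ → Set M) : Prop :=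
  (∀ l ∈ J, IsIsolatedInvariant (φ l) (K l)) ∧
    ∀ l₀ ∈ J, ∀ N : Set M, IsIsolatingNbhd (φ l₀) N (K l₀) →
      ∃ δ > 0, ∀ l ∈ J, |l - l₀| < δ → IsIsolatingNbhd (φ l) N (K l)

/-- The family `(φ_λ)` is uniformly dissipative. -/
def UniformlyDissipative (φ : ℝ → M → ℝ → M) : Prop :=
  (∀ l ∈ Icc (0 : ℝ) 1, ∀ x, (omegaLimitSet (φ l) x).Nonempty) ∧
    IsCompact (closure (⋃ l ∈ Icc (0 : ℝ) 1, ⋃ x, omegaLimitSet (φ l) x))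

end Defs

section NormedDefs

variable {E : Type*} [NormedAddCommGroup E]

/-- A coercive family of dissipative flows: for every continuation of the global
attractor of `φ₀`, the regions of attraction are bounded for all small `λ > 0`. -/
def CoerciveFamily (φ : ℝ → E → ℝ → E) : Prop :=
  ∀ lam1 ∈ Ioc (0 : ℝ) 1, ∀ K : ℝ → Set E,
    IsContinuation φ (Icc 0 lam1) K → IsGlobalAttractor (φ 0) (K 0) →
      ∃ lam0, 0 < lam0 ∧ lam0 ≤ lam1 ∧ ∀ l, 0 < l → l < lam0 →
        IsBounded (attractionRegion (φ l) (K l))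

/-- A polar family of dissipative flows: it has arbitrarily large bounded trajectories. -/
def PolarFamily (φ : ℝ → E → ℝ → E) : Prop :=
  ∀ L > 0, ∃ lam0 > 0, ∀ l, 0 < l → l < lam0 → l ≤ 1 →
    ∃ x : E, IsBounded (range (φ l x)) ∧
      ∃ tl < (0 : ℝ), ∀ t < tl, L < ‖φ l x t‖

/-- The set of points whose trajectory tends to infinity in negative time
(the region of repulsion of the point at infinity). -/
def escapeRegion (φ : ℝ → E → ℝ → E) (l : ℝ) : Set E :=
  {x | Tendsto (fun t => ‖φ l x t‖) atBot atTop}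

/-- The complementary isolated invariant set
`C_λ = ℝⁿ ∖ (A_λ(K_λ) ∪ R_λ(∞))`. -/
def complementarySet (φ : ℝ → E → ℝ → E) (K : ℝ → Set E) (l : ℝ) : Set E :=
  (attractionRegion (φ l) (K l) ∪ escapeRegion φ l)ᶜ

end NormedDefs

set_option linter.unusedSectionVars false

namespace PolarAux

variable {X : Type*} [NormedAddCommGroup X] [NormedSpace ℝ X] [ProperSpace X]

/-- points whose full orbit stays in `N` -/
def finv (f : X → ℝ → X) (N : Set X) : Set X := {x | ∀ t : ℝ, f x t ∈ N}

/-- forward orbit of the set `D` from time `T` on -/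
def ftl (f : X → ℝ → X) (D : Set X) (T : ℝ) : Set X := ⋃ x ∈ D, f x '' Ici T

/-- omega limit set of the set `D` -/
def fom (f : X → ℝ → X) (D : Set X) : Set X := ⋂ T ∈ Ici (0 : ℝ), closure (ftl f D T)

/-- the set of points with bounded full orbit -/
def mset (f : X → ℝ → X) : Set X := {x | IsBounded (range (f x))}

variable {f : X → ℝ → X}

lemma mem_ftl {D : Set X} {T : ℝ} {x : X} :
    x ∈ ftl f D T ↔ ∃ y ∈ D, ∃ t, T ≤ t ∧ f y t = x := by
  simp [ftl, mem_iUnion, mem_image, mem_Ici]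

lemma ftl_mono {D : Set X} {T T' : ℝ} (h : T ≤ T') : ftl f D T' ⊆ ftl f D T := by
  rintro x hx
  rw [mem_ftl] at hx ⊢
  obtain ⟨y, hy, t, ht, rfl⟩ := hx
  exact ⟨y, hy, t, le_trans h ht, rfl⟩

lemma cont1 (hc : Continuous (fun p : X × ℝ => f p.1 p.2)) (t : ℝ) :
    Continuous (fun x => f x t) :=
  hc.comp (continuous_id.prodMk continuous_const)

lemma cont2 (hc : Continuous (fun p : X × ℝ => f p.1 p.2)) (x : X) :
    Continuous (f x) :=
  hc.comp (continuous_const.prodMk continuous_id)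

lemma invariant_of (h0 : ∀ x, f x 0 = x) (hadd : ∀ x s t, f (f x s) t = f x (s + t))
    {S : Set X} (h : ∀ s : ℝ, ∀ x ∈ S, f x s ∈ S) :
    FlowInvariant f S := by
  intro t
  apply subset_antisymm
  · rintro _ ⟨x, hx, rfl⟩; exact h t x hx
  · intro x hx
    refine ⟨f x (-t), h (-t) x hx, ?_⟩
    show f (f x (-t)) t = x
    rw [hadd, neg_add_cancel, h0]

lemma mem_invariant {S : Set X} (hS : FlowInvariant f S) {x : X} (hx : x ∈ S) (t : ℝ) :
    f x t ∈ S := by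
  rw [← hS t]; exact ⟨x, hx, rfl⟩

lemma range_shift (hadd : ∀ x s t, f (f x s) t = f x (s + t)) (x : X) (t : ℝ) :
    range (f (f x t)) = range (f x) := by
  ext y
  constructor
  · rintro ⟨s, rfl⟩; exact ⟨t + s, (hadd x t s).symm⟩
  · rintro ⟨s, rfl⟩
    exact ⟨s - t, by rw [hadd]; congr 1; ring⟩

lemma mset_invariant (h0 : ∀ x, f x 0 = x) (hadd : ∀ x s t, f (f x s) t = f x (s + t)) :
    FlowInvariant f (mset f) := by
  apply invariant_of h0 hadd
  intro s x hx
  show IsBounded (range (f (f x s)))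
  rw [range_shift hadd]
  exact hx

lemma mem_mset_of_invariant_bounded (h0 : ∀ x, f x 0 = x)
    (hadd : ∀ x s t, f (f x s) t = f x (s + t)) {S : Set X} (hS : FlowInvariant f S)
    (hb : IsBounded S) {x : X} (hx : x ∈ S) : x ∈ mset f := by
  apply hb.subset
  rintro _ ⟨t, rfl⟩
  exact mem_invariant hS hx t

lemma omega_sub_tail (x : X) {t : ℝ} (ht : 0 < t) :
    omegaLimitSet f x ⊆ closure (f x '' Ici t) := by
  intro z hz
  exact mem_iInter₂.1 hz t ht

lemma omega_invariant (hc : Continuous (fun p : X × ℝ => f p.1 p.2))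
    (h0 : ∀ x, f x 0 = x) (hadd : ∀ x s t, f (f x s) t = f x (s + t)) (x : X) :
    FlowInvariant f (omegaLimitSet f x) := by
  apply invariant_of h0 hadd
  intro s z hz
  rw [omegaLimitSet, mem_iInter₂]
  intro t' ht'
  set t : ℝ := max 1 (t' - s) with hts
  have ht : (0:ℝ) < t := lt_of_lt_of_le one_pos (le_max_left _ _)
  have hz' : z ∈ closure (f x '' Ici t) := omega_sub_tail x ht hz
  have h1 : f z s ∈ closure ((fun y => f y s) '' (f x '' Ici t)) :=
    image_closure_subset_closure_image (cont1 hc s) ⟨z, hz', rfl⟩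
  refine closure_mono ?_ h1
  rintro _ ⟨_, ⟨u, hu, rfl⟩, rfl⟩
  refine ⟨u + s, ?_, (hadd x u s).symm⟩
  have h2 : t' - s ≤ t := le_max_right _ _
  have h3 : t ≤ u := hu
  simp only [mem_Ici]
  linarith

lemma omega_subset_C (x : X) :
    omegaLimitSet f x ⊆ closure (⋃ y, omegaLimitSet f y) :=
  fun z hz => subset_closure (mem_iUnion.mpr ⟨x, hz⟩)

lemma omega_subset_mset (hc : Continuous (fun p : X × ℝ => f p.1 p.2))
    (h0 : ∀ x, f x 0 = x) (hadd : ∀ x s t, f (f x s) t = f x (s + t))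
    (hd : Dissipative f) (x : X) :
    omegaLimitSet f x ⊆ mset f := by
  intro z hz
  exact mem_mset_of_invariant_bounded h0 hadd (omega_invariant hc h0 hadd x)
    (hd.2.isBounded.subset (omega_subset_C x)) hz

end PolarAux
namespace PolarAux

variable {X : Type*} [NormedAddCommGroup X] [NormedSpace ℝ X] [ProperSpace X]
variable {f : X → ℝ → X}

lemma backward_cluster (x : X) (hx : IsBounded (range (f x))) :
    ∃ z, ∃ σ : ℕ → ℕ, StrictMono σ ∧
      Tendsto (fun k => f x (-(σ k : ℝ))) atTop (𝓝 z) := by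
  have hP : IsCompact (closure (range (f x))) :=
    isCompact_of_isClosed_isBounded isClosed_closure hx.closure
  have hmem : ∀ k : ℕ, f x (-(k : ℝ)) ∈ closure (range (f x)) :=
    fun k => subset_closure (mem_range_self _)
  obtain ⟨z, _, σ, hσ, hconv⟩ := hP.tendsto_subseq hmem
  exact ⟨z, σ, hσ, hconv⟩

/-- A global attractor contains (up to distance 1) every point with bounded full orbit. -/
lemma global_attractor_absorbs (hf : IsFlow f)
    (hω : ∀ y : X, (omegaLimitSet f y).Nonempty) {K : Set X}
    (hK : IsGlobalAttractor f K) {x : X} (hx : IsBounded (range (f x))) :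
    ∃ k ∈ K, dist x k < 1 := by
  obtain ⟨hc, h0, hadd⟩ := hf
  obtain ⟨hKc, hKinv, hKst, hKattr⟩ := hK
  have hattr : ∀ y : X, y ∈ attractionRegion f K := by
    intro y; rw [hKattr]; trivial
  have hKne : K.Nonempty := by
    obtain ⟨w, hw⟩ := hω x
    exact ⟨w, (hattr x).2 hw⟩
  set U := {y : X | infDist y K < 1} with hU
  have hUopen : IsOpen U := isOpen_lt (continuous_infDist_pt K) continuous_const
  have hKU : K ⊆ U := by
    intro k hk
    show infDist k K < 1
    rw [infDist_zero_of_mem hk]; norm_num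
  obtain ⟨V, hVmem, hVU⟩ := hKst U (hUopen.mem_nhdsSet.mpr hKU)
  obtain ⟨W, hWopen, hKW, hWV⟩ := mem_nhdsSet_iff_exists.mp hVmem
  obtain ⟨z, σ, hσmono, hσtend⟩ := backward_cluster x hx
  -- the forward orbit of z enters W
  obtain ⟨w, hwz⟩ := hω z
  have hwW : w ∈ W := hKW ((hattr z).2 hwz)
  have hwcl : w ∈ closure (f z '' Ici 1) := omega_sub_tail z one_pos hwz
  obtain ⟨_, hpW, s, hs, rfl⟩ :=
    (_root_.mem_closure_iff.1 hwcl W hWopen hwW)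
  -- pull back along the backward orbit
  have htend : Tendsto (fun k => f (f x (-(σ k : ℝ))) s) atTop (𝓝 (f z s)) :=
    ((cont1 hc s).tendsto z).comp hσtend
  have hev1 : ∀ᶠ k in atTop, f (f x (-(σ k : ℝ))) s ∈ W :=
    htend.eventually_mem (hWopen.mem_nhds hpW)
  have hevσ : Tendsto (fun k => ((σ k : ℕ) : ℝ)) atTop atTop :=
    tendsto_natCast_atTop_atTop.comp hσmono.tendsto_atTop
  have hev2 : ∀ᶠ k in atTop, s ≤ ((σ k : ℕ) : ℝ) := hevσ.eventually_ge_atTop s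
  obtain ⟨k, hkW, hks⟩ := (hev1.and hev2).exists
  set u : ℝ := -(σ k : ℝ) + s with hu
  have huW : f x u ∈ V := by
    apply hWV
    rw [← hadd]
    exact hkW
  have hxU : x ∈ U := by
    have h2 := hVU _ huW (-u) (by simp only [hu]; linarith)
    rwa [hadd, add_neg_cancel, h0] at h2
  exact (infDist_lt_iff hKne).1 hxU

/-- every trajectory eventually stays within distance 1 of `C`. -/
lemma shell (hc : Continuous (fun p : X × ℝ => f p.1 p.2))
    (hd : Dissipative f) (x : X) :
    ∃ T : ℝ, 0 ≤ T ∧ ∀ t, T ≤ t →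
      infDist (f x t) (closure (⋃ y, omegaLimitSet f y)) < 1 := by
  set C := closure (⋃ y, omegaLimitSet f y) with hC
  obtain ⟨z₀, hz₀⟩ := hd.1 x
  have hCne : C.Nonempty := ⟨z₀, omega_subset_C x hz₀⟩
  have low : ∀ T : ℝ, ∃ t, T ≤ t ∧ infDist (f x t) C < 1/2 := by
    intro T
    obtain ⟨z, hz⟩ := hd.1 x
    have hzC : z ∈ C := omega_subset_C x hz
    have hcl : z ∈ closure (f x '' Ici (max T 1)) :=
      omega_sub_tail x (lt_of_lt_of_le one_pos (le_max_right _ _)) hz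
    rw [Metric.mem_closure_iff] at hcl
    obtain ⟨p, ⟨t, ht, rfl⟩, hdist⟩ := hcl (1/2) (by norm_num)
    refine ⟨t, le_trans (le_max_left _ _) ht, ?_⟩
    calc infDist (f x t) C ≤ dist (f x t) z := infDist_le_dist_of_mem hzC
      _ = dist z (f x t) := dist_comm _ _
      _ < 1/2 := hdist
  by_contra hcon
  push_neg at hcon
  have high : ∀ T : ℝ, 0 ≤ T → ∃ t, T ≤ t ∧ 1 ≤ infDist (f x t) C := by
    intro T hT
    obtain ⟨t, ht, h1⟩ := hcon T hT
    exact ⟨t, ht, h1⟩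
  have hgcont : Continuous (fun t => infDist (f x t) C) :=
    (continuous_infDist_pt C).comp (cont2 hc x)
  have cross : ∀ k : ℕ, ∃ w, (k : ℝ) ≤ w ∧ infDist (f x w) C = 3/4 := by
    intro k
    obtain ⟨t₁, ht₁, hlow⟩ := low (k : ℝ)
    obtain ⟨t₂, ht₂, hhigh⟩ := high (max t₁ (k : ℝ))
      (le_trans (Nat.cast_nonneg k) (le_max_right _ _))
    have h12 : t₁ ≤ t₂ := le_trans (le_max_left _ _) ht₂
    have hiv := intermediate_value_Icc h12 hgcont.continuousOn
    have hmem : (3/4 : ℝ) ∈ Icc (infDist (f x t₁) C) (infDist (f x t₂) C) :=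
      ⟨by linarith, by linarith⟩
    obtain ⟨w, hw, hgw⟩ := hiv hmem
    exact ⟨w, le_trans ht₁ hw.1, hgw⟩
  choose w hwge hweq using cross
  obtain ⟨RC, hRC⟩ := isBounded_iff_forall_norm_le.1 hd.2.isBounded
  have hScpt : IsCompact {y : X | infDist y C = 3/4} := by
    apply isCompact_of_isClosed_isBounded
    · exact isClosed_eq (continuous_infDist_pt C) continuous_const
    · rw [isBounded_iff_forall_norm_le]
      refine ⟨RC + 1, ?_⟩
      intro y hy
      have : infDist y C < 1 := by rw [hy]; norm_num
      obtain ⟨c, hcC, hdc⟩ := (infDist_lt_iff hCne).1 this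
      have hy1 : ‖y‖ ≤ ‖c‖ + ‖y - c‖ := by
        simpa using norm_add_le c (y - c)
      have h2 : ‖y - c‖ = dist y c := (dist_eq_norm _ _).symm
      have := hRC c hcC
      rw [h2] at hy1
      linarith
  have hmemS : ∀ k : ℕ, f x (w k) ∈ {y : X | infDist y C = 3/4} := fun k => hweq k
  obtain ⟨z, hzS, σ, hσ, htend⟩ := hScpt.tendsto_subseq hmemS
  have hzω : z ∈ omegaLimitSet f x := by
    rw [omegaLimitSet, mem_iInter₂]
    intro t ht
    apply mem_closure_of_tendsto htend
    filter_upwards [eventually_ge_atTop ⌈t⌉₊] with k hk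
    refine ⟨w (σ k), ?_, rfl⟩
    have h1 : t ≤ (⌈t⌉₊ : ℝ) := Nat.le_ceil t
    have h2 : ((⌈t⌉₊ : ℕ) : ℝ) ≤ (k : ℝ) := Nat.cast_le.2 hk
    have h3 : (k : ℝ) ≤ (σ k : ℝ) := Nat.cast_le.2 hσ.le_apply
    have h4 : ((σ k : ℕ) : ℝ) ≤ w (σ k) := hwge (σ k)
    simp only [mem_Ici]
    linarith
  have h0' : infDist z C = 0 := infDist_zero_of_mem (omega_subset_C x hzω)
  have h34 : infDist z C = 3/4 := hzS
  linarith [h0' ▸ h34]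

end PolarAux
namespace PolarAux

variable {X : Type*} [NormedAddCommGroup X] [NormedSpace ℝ X] [ProperSpace X]
variable {f : X → ℝ → X}

/-- Pliss-type lemma: forward orbits of a compact set containing the 1-neighborhood of
`C` in its interior are uniformly bounded. -/
lemma pliss (hc : Continuous (fun p : X × ℝ => f p.1 p.2))
    (h0 : ∀ x, f x 0 = x) (hadd : ∀ x s t, f (f x s) t = f x (s + t))
    (hd : Dissipative f) {B : Set X} (hB : IsCompact B)
    (hCB : {y : X | infDist y (closure (⋃ z, omegaLimitSet f z)) < 1} ⊆ interior B) :
    IsBounded (ftl f B 0) := by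
  by_contra hub
  rw [isBounded_iff_forall_norm_le] at hub
  push_neg at hub
  have hwit : ∀ j : ℕ, ∃ x ∈ B, ∃ t, 0 ≤ t ∧ (j : ℝ) < ‖f x t‖ := by
    intro j
    obtain ⟨y, hy, hyn⟩ := hub (j : ℝ)
    rw [mem_ftl] at hy
    obtain ⟨x, hx, t, ht, rfl⟩ := hy
    exact ⟨x, hx, t, ht, hyn⟩
  choose xs hxs ts hts hnorm using hwit
  -- last exit times
  have hgr : ∀ j : ℕ, ∃ s, IsGreatest (Icc 0 (ts j) ∩ (fun s => f (xs j) s) ⁻¹' B) s := by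
    intro j
    apply IsCompact.exists_isGreatest
    · exact isCompact_of_isClosed_isBounded
        (isClosed_Icc.inter (hB.isClosed.preimage (cont2 hc (xs j))))
        ((isBounded_Icc 0 (ts j)).subset (fun s hs => hs.1))
    · refine ⟨0, ⟨le_rfl, hts j⟩, ?_⟩
      show f (xs j) 0 ∈ B
      rw [h0]; exact hxs j
  choose ss hss using hgr
  have hssIcc : ∀ j, ss j ∈ Icc 0 (ts j) := fun j => (hss j).1.1
  have hyB : ∀ j, f (xs j) (ss j) ∈ B := fun j => (hss j).1.2
  set ys : ℕ → X := fun j => f (xs j) (ss j) with hys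
  have hafter : ∀ j, ∀ r, 0 < r → r ≤ ts j - ss j → f (ys j) r ∉ B := by
    intro j r hr hr2 hmem
    have hmem2 : ss j + r ∈ Icc 0 (ts j) ∩ (fun s => f (xs j) s) ⁻¹' B := by
      constructor
      · exact ⟨by linarith [(hssIcc j).1], by linarith⟩
      · show f (xs j) (ss j + r) ∈ B
        rw [← hadd]; exact hmem
    have := (hss j).2 hmem2
    linarith
  -- the times to blow-up tend to infinity
  have hrg : Tendsto (fun j => ts j - ss j) atTop atTop := by
    rw [Filter.tendsto_atTop]
    intro M
    have hKc : IsCompact ((fun p : X × ℝ => f p.1 p.2) '' (B ×ˢ Icc 0 (max M 0))) :=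
      (hB.prod isCompact_Icc).image hc
    obtain ⟨cM, hcM⟩ := isBounded_iff_forall_norm_le.1 hKc.isBounded
    filter_upwards [eventually_gt_atTop ⌈max cM 0⌉₊] with j hj
    by_contra hlt
    push_neg at hlt
    have hmem : f (ys j) (ts j - ss j) ∈
        (fun p : X × ℝ => f p.1 p.2) '' (B ×ˢ Icc 0 (max M 0)) := by
      have hIcc : ts j - ss j ∈ Icc (0:ℝ) (max M 0) :=
        ⟨by linarith [(hssIcc j).1, (hssIcc j).2], by linarith [le_max_left M 0]⟩
      exact ⟨(ys j, ts j - ss j), ⟨hyB j, hIcc⟩, rfl⟩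
    have heq : f (ys j) (ts j - ss j) = f (xs j) (ts j) := by
      rw [hys]; show f (f (xs j) (ss j)) (ts j - ss j) = _
      rw [hadd]; congr 1; ring
    have hb1 := hcM _ hmem
    rw [heq] at hb1
    have hb2 := hnorm j
    have hb3 : (⌈max cM 0⌉₊ : ℝ) < (j : ℝ) := Nat.cast_lt.2 hj
    have hb4 : max cM 0 ≤ (⌈max cM 0⌉₊ : ℝ) := Nat.le_ceil _
    have hb5 : cM ≤ max cM 0 := le_max_left _ _
    linarith
  -- extract a convergent subsequence of the last-exit points
  obtain ⟨y, hyB', σ, hσ, hconv⟩ := hB.tendsto_subseq hyB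
  obtain ⟨T, hT0, hshell⟩ := shell hc hd y
  set T' : ℝ := max T 1 with hT'
  have hT'pos : (0:ℝ) < T' := lt_of_lt_of_le one_pos (le_max_right _ _)
  have hyT : f y T' ∈ interior B := hCB (hshell T' (le_max_left _ _))
  have htnd : Tendsto (fun k => f (ys (σ k)) T') atTop (𝓝 (f y T')) :=
    ((cont1 hc T').tendsto y).comp hconv
  have hev1 : ∀ᶠ k in atTop, f (ys (σ k)) T' ∈ B :=
    htnd.eventually_mem (mem_interior_iff_mem_nhds.mp hyT)
  have hev2 : ∀ᶠ k in atTop, T' ≤ ts (σ k) - ss (σ k) :=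
    (hrg.comp hσ.tendsto_atTop).eventually_ge_atTop T'
  obtain ⟨k, hk1, hk2⟩ := (hev1.and hev2).exists
  exact hafter (σ k) T' hT'pos hk2 hk1

/-- every point with bounded full orbit lies on the forward orbit of `B`. -/
lemma mset_sub_ftl (hc : Continuous (fun p : X × ℝ => f p.1 p.2))
    (h0 : ∀ x, f x 0 = x) (hadd : ∀ x s t, f (f x s) t = f x (s + t))
    (hd : Dissipative f) {B : Set X}
    (hCB : {y : X | infDist y (closure (⋃ z, omegaLimitSet f z)) < 1} ⊆ interior B) :
    mset f ⊆ ftl f B 0 := by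
  intro x hx
  obtain ⟨z, σ, hσ, hconv⟩ := backward_cluster x hx
  obtain ⟨T, hT0, hshell⟩ := shell hc hd z
  have hzT : f z T ∈ interior B := hCB (hshell T le_rfl)
  have htnd : Tendsto (fun k => f (f x (-(σ k : ℝ))) T) atTop (𝓝 (f z T)) :=
    ((cont1 hc T).tendsto z).comp hconv
  have hev1 : ∀ᶠ k in atTop, f (f x (-(σ k : ℝ))) T ∈ B :=
    htnd.eventually_mem (mem_interior_iff_mem_nhds.mp hzT)
  have hev2 : ∀ᶠ k in atTop, T ≤ ((σ k : ℕ) : ℝ) :=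
    (tendsto_natCast_atTop_atTop.comp hσ.tendsto_atTop).eventually_ge_atTop T
  obtain ⟨k, hk1, hk2⟩ := (hev1.and hev2).exists
  rw [mem_ftl]
  refine ⟨f x (-(σ k : ℝ) + T), by rwa [hadd] at hk1, (σ k : ℝ) - T, by linarith, ?_⟩
  rw [hadd]
  have : -(σ k : ℝ) + T + ((σ k : ℝ) - T) = 0 := by ring
  rw [this, h0]

lemma fom_sub_closure_ftl {D : Set X} {T : ℝ} (hT : 0 ≤ T) :
    fom f D ⊆ closure (ftl f D T) :=
  fun z hz => mem_iInter₂.1 hz T hT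

lemma fom_invariant (hc : Continuous (fun p : X × ℝ => f p.1 p.2))
    (h0 : ∀ x, f x 0 = x) (hadd : ∀ x s t, f (f x s) t = f x (s + t)) (D : Set X) :
    FlowInvariant f (fom f D) := by
  apply invariant_of h0 hadd
  intro s z hz
  rw [fom, mem_iInter₂]
  intro T' hT'
  set T : ℝ := max 0 (T' - s) with hTdef
  have hT : (0:ℝ) ≤ T := le_max_left _ _
  have hz' : z ∈ closure (ftl f D T) := fom_sub_closure_ftl hT hz
  have h1 : f z s ∈ closure ((fun y => f y s) '' ftl f D T) :=
    image_closure_subset_closure_image (cont1 hc s) ⟨z, hz', rfl⟩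
  refine closure_mono ?_ h1
  rintro _ ⟨_, hmem, rfl⟩
  rw [mem_ftl] at hmem
  obtain ⟨x, hxD, u, hu, rfl⟩ := hmem
  rw [mem_ftl]
  refine ⟨x, hxD, u + s, ?_, (hadd x u s).symm⟩
  have : T' - s ≤ T := le_max_right _ _
  linarith

lemma fom_sub_mset (hc : Continuous (fun p : X × ℝ => f p.1 p.2))
    (h0 : ∀ x, f x 0 = x) (hadd : ∀ x s t, f (f x s) t = f x (s + t)) {D : Set X}
    (hfwb : IsBounded (ftl f D 0)) : fom f D ⊆ mset f := by
  intro z hz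
  exact mem_mset_of_invariant_bounded h0 hadd (fom_invariant hc h0 hadd D)
    (hfwb.closure.subset (fom_sub_closure_ftl le_rfl)) hz

/-- uniform attraction of the omega limit set of `D`. -/
lemma uniform_attraction (hc : Continuous (fun p : X × ℝ => f p.1 p.2))
    {D : Set X} (hfwb : IsBounded (ftl f D 0)) {U : Set X}
    (hUopen : IsOpen U) (hsub : fom f D ⊆ U) :
    ∃ T : ℝ, 0 ≤ T ∧ ∀ x ∈ D, ∀ t, T ≤ t → f x t ∈ U := by
  have hkey : ∃ k : ℕ, closure (ftl f D (k : ℝ)) ∩ Uᶜ = ∅ := by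
    by_contra hcon
    push_neg at hcon
    set G : ℕ → Set X := fun k => closure (ftl f D (k : ℝ)) ∩ Uᶜ with hG
    have hne : ∀ k : ℕ, (G k).Nonempty := hcon
    have hdec : ∀ k : ℕ, G (k+1) ⊆ G k := by
      intro k
      apply inter_subset_inter_left
      apply closure_mono (ftl_mono ?_)
      push_cast
      linarith
    have hcl : ∀ k : ℕ, IsClosed (G k) :=
      fun k => isClosed_closure.inter hUopen.isClosed_compl
    have hcpt : IsCompact (G 0) := by
      apply isCompact_of_isClosed_isBounded (hcl 0)
      apply hfwb.closure.subset
      refine (inter_subset_left).trans (closure_mono (ftl_mono ?_))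
      norm_num
    obtain ⟨y, hy⟩ := IsCompact.nonempty_iInter_of_sequence_nonempty_isCompact_isClosed
      G hdec hne hcpt hcl
    have hyom : y ∈ fom f D := by
      rw [fom, mem_iInter₂]
      intro T hT
      have h1 := (mem_iInter.1 hy ⌈T⌉₊).1
      exact closure_mono (ftl_mono (Nat.le_ceil T)) h1
    exact (mem_iInter.1 hy 0).2 (hsub hyom)
  obtain ⟨k, hk⟩ := hkey
  refine ⟨k, Nat.cast_nonneg k, ?_⟩
  intro x hxD t ht
  have h1 : f x t ∈ closure (ftl f D k) :=
    subset_closure (mem_ftl.2 ⟨x, hxD, t, ht, rfl⟩)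
  by_contra hU
  exact absurd (mem_inter h1 hU) (by rw [hk]; exact notMem_empty _)

/-- openness of the finite-time tube. -/
lemma tube_open (hc : Continuous (fun p : X × ℝ => f p.1 p.2)) (T : ℝ)
    {U : Set X} (hU : IsOpen U) :
    IsOpen {x : X | ∀ t ∈ Icc (0:ℝ) T, f x t ∈ U} := by
  rw [isOpen_iff_mem_nhds]
  intro x hx
  have hsub : {x} ×ˢ Icc (0:ℝ) T ⊆ (fun p : X × ℝ => f p.1 p.2) ⁻¹' U := by
    rintro ⟨a, t⟩ ⟨ha, ht⟩
    simp only [mem_singleton_iff] at ha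
    subst ha
    exact hx t ht
  obtain ⟨u, v, huo, hvo, hxu, hIv, huv⟩ :=
    generalized_tube_lemma isCompact_singleton isCompact_Icc (hU.preimage hc) hsub
  rw [_root_.mem_nhds_iff]
  refine ⟨u, ?_, huo, hxu rfl⟩
  intro x' hx' t ht
  exact huv (mk_mem_prod hx' (hIv ht))

end PolarAux
namespace PolarAux

variable {X : Type*} [NormedAddCommGroup X] [NormedSpace ℝ X] [ProperSpace X]
variable {f : X → ℝ → X}

lemma finv_invariant (h0 : ∀ x, f x 0 = x) (hadd : ∀ x s t, f (f x s) t = f x (s + t))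
    (N : Set X) : FlowInvariant f (finv f N) := by
  apply invariant_of h0 hadd
  intro s x hx t
  rw [hadd]
  exact hx (s + t)

lemma finv_subset (h0 : ∀ x, f x 0 = x) {N : Set X} : finv f N ⊆ N := by
  intro x hx
  have := hx 0
  rwa [h0] at this

lemma finv_isClosed (hc : Continuous (fun p : X × ℝ => f p.1 p.2)) {N : Set X}
    (hN : IsClosed N) : IsClosed (finv f N) := by
  have : finv f N = ⋂ t : ℝ, (fun x => f x t) ⁻¹' N := by
    ext x; simp [finv, mem_iInter]
  rw [this]
  exact isClosed_iInter (fun t => hN.preimage (cont1 hc t))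

lemma subset_finv {S N : Set X} (hS : FlowInvariant f S) (hSN : S ⊆ N) :
    S ⊆ finv f N :=
  fun x hx t => hSN (mem_invariant hS hx t)

lemma finv_sub_mset (h0 : ∀ x, f x 0 = x) (hadd : ∀ x s t, f (f x s) t = f x (s + t))
    {N : Set X} (hN : IsBounded N) : finv f N ⊆ mset f := by
  intro x hx
  exact mem_mset_of_invariant_bounded h0 hadd (finv_invariant h0 hadd N)
    (hN.subset (finv_subset h0)) hx

/-- Main single-flow theorem: if the set of bounded orbits is inside a compact set `D`
whose forward orbit is bounded, then it is a global attractor. -/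
lemma global_attractor_mset (hc : Continuous (fun p : X × ℝ => f p.1 p.2))
    (h0 : ∀ x, f x 0 = x) (hadd : ∀ x s t, f (f x s) t = f x (s + t))
    (hd : Dissipative f) {D : Set X} (hDc : IsCompact D)
    (hMD : mset f ⊆ interior D) (hfwb : IsBounded (ftl f D 0)) :
    IsGlobalAttractor f (mset f) := by
  have hminv : FlowInvariant f (mset f) := mset_invariant h0 hadd
  have hMD' : mset f ⊆ D := hMD.trans interior_subset
  have hmeq : mset f = finv f D :=
    subset_antisymm (subset_finv hminv hMD')
      (finv_sub_mset h0 hadd hDc.isBounded)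
  have hmcpt : IsCompact (mset f) := by
    rw [hmeq]
    exact isCompact_of_isClosed_isBounded (finv_isClosed hc hDc.isClosed)
      (hDc.isBounded.subset (finv_subset h0))
  have hattr : attractionRegion f (mset f) = univ :=
    eq_univ_of_forall (fun x => ⟨hd.1 x, omega_subset_mset hc h0 hadd hd x⟩)
  refine ⟨hmcpt, hminv, ?_, hattr⟩
  intro U hU
  obtain ⟨O, hOopen, hMO, hOU⟩ := mem_nhdsSet_iff_exists.mp hU
  set U₀ := O ∩ interior D with hU₀
  have hU₀open : IsOpen U₀ := hOopen.inter isOpen_interior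
  have hMU₀ : mset f ⊆ U₀ := fun x hx => ⟨hMO hx, hMD hx⟩
  have homsub : fom f D ⊆ U₀ := (fom_sub_mset hc h0 hadd hfwb).trans hMU₀
  obtain ⟨T, hT0, hTat⟩ := uniform_attraction hc hfwb hU₀open homsub
  set V := interior D ∩ {x : X | ∀ t ∈ Icc (0:ℝ) T, f x t ∈ U₀} with hV
  have hVopen : IsOpen V := isOpen_interior.inter (tube_open hc T hU₀open)
  have hMV : mset f ⊆ V := by
    intro x hx
    exact ⟨hMD hx, fun t _ => hMU₀ (mem_invariant hminv hx t)⟩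
  refine ⟨V, hVopen.mem_nhdsSet.mpr hMV, ?_⟩
  intro x hxV t ht
  rcases le_or_gt t T with h | h
  · exact hOU (hxV.2 t ⟨ht, h⟩).1
  · exact hOU (hTat x (interior_subset hxV.1) t h.le).1

/-- iteration of a robust absorbing step. -/
lemma absorb_iterate (hadd : ∀ x s t, f (f x s) t = f x (s + t))
    {D W : Set X} (hWD : W ⊆ D) {T : ℝ} (hT : 0 < T)
    (hstep : ∀ x ∈ D, ∀ t, T ≤ t → t ≤ 2*T → f x t ∈ W) :
    ∀ x ∈ D, ∀ t, T ≤ t → f x t ∈ W := by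
  have key : ∀ k : ℕ, ∀ x ∈ D, ∀ t, T ≤ t → t ≤ T + (k+1)*T → f x t ∈ W := by
    intro k
    induction k with
    | zero =>
      intro x hx t h1 h2
      exact hstep x hx t h1 (by push_cast at h2; linarith)
    | succ k ih =>
      intro x hx t h1 h2
      rcases le_or_gt t (T + (k+1)*T) with h | h
      · exact ih x hx t h1 h
      · have hk0 : (0:ℝ) ≤ (k:ℝ) := Nat.cast_nonneg k
        have h3 : T ≤ t - T := by push_cast at h; linarith [mul_nonneg hk0 hT.le]
        have h4 : t - T ≤ T + (k+1)*T := by push_cast at h2 ⊢; linarith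
        have h5 := ih x hx (t - T) h3 h4
        have h6 := hstep (f x (t-T)) (hWD h5) T le_rfl (by linarith)
        rwa [hadd, sub_add_cancel] at h6
  intro x hx t ht
  obtain ⟨k, hk⟩ := exists_nat_ge ((t - T)/T)
  apply key k x hx t ht
  rw [div_le_iff₀ hT] at hk
  push_cast
  linarith

/-- forward orbits are trapped by the absorbing structure. -/
lemma ftl_bound (h0 : ∀ x, f x 0 = x) (hadd : ∀ x s t, f (f x s) t = f x (s + t))
    {D W Bb : Set X} (hWD : W ⊆ D) {T : ℝ} (hT : 0 < T)
    (hstep : ∀ x ∈ D, ∀ t, T ≤ t → t ≤ 2*T → f x t ∈ W)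
    (hfin : ∀ x ∈ D, ∀ t, 0 ≤ t → t ≤ 2*T → f x t ∈ Bb) :
    ftl f D 0 ⊆ W ∪ Bb := by
  rintro y hy
  rw [mem_ftl] at hy
  obtain ⟨x, hx, t, ht, rfl⟩ := hy
  rcases le_or_gt t (2*T) with h | h
  · exact Or.inr (hfin x hx t ht h)
  · exact Or.inl (absorb_iterate hadd hWD hT hstep x hx t (by linarith))

end PolarAux
namespace PolarAux

variable {X : Type*} [NormedAddCommGroup X] [NormedSpace ℝ X] [ProperSpace X]
variable {φ : ℝ → X → ℝ → X}

lemma param_tendsto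
    (hφc : ContinuousOn (fun p : ℝ × X × ℝ => φ p.1 p.2.1 p.2.2)
      ((Icc 0 1 : Set ℝ) ×ˢ (univ : Set (X × ℝ))))
    {l : ℕ → ℝ} {l₀ : ℝ} (hl : ∀ j, l j ∈ Icc (0:ℝ) 1) (hl₀ : l₀ ∈ Icc (0:ℝ) 1)
    (hlt : Tendsto l atTop (𝓝 l₀)) {x : ℕ → X} {x₀ : X} (hx : Tendsto x atTop (𝓝 x₀))
    {t : ℕ → ℝ} {t₀ : ℝ} (ht : Tendsto t atTop (𝓝 t₀)) :
    Tendsto (fun j => φ (l j) (x j) (t j)) atTop (𝓝 (φ l₀ x₀ t₀)) := by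
  have hcw : ContinuousWithinAt (fun p : ℝ × X × ℝ => φ p.1 p.2.1 p.2.2)
      ((Icc 0 1 : Set ℝ) ×ˢ (univ : Set (X × ℝ))) (l₀, x₀, t₀) :=
    hφc _ (mk_mem_prod hl₀ (mem_univ _))
  have hseq : Tendsto (fun j => ((l j, (x j, t j)) : ℝ × X × ℝ)) atTop
      (𝓝[(Icc 0 1 : Set ℝ) ×ˢ (univ : Set (X × ℝ))] (l₀, x₀, t₀)) := by
    rw [tendsto_nhdsWithin_iff]
    exact ⟨hlt.prodMk_nhds (hx.prodMk_nhds ht),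
      Filter.Eventually.of_forall (fun j => mk_mem_prod (hl j) (mem_univ _))⟩
  exact Filter.Tendsto.comp hcw hseq

/-- robustness of open containment of compact finite-time trajectory pieces as `l → 0`. -/
lemma param_robust
    (hφc : ContinuousOn (fun p : ℝ × X × ℝ => φ p.1 p.2.1 p.2.2)
      ((Icc 0 1 : Set ℝ) ×ˢ (univ : Set (X × ℝ))))
    {D : Set X} (hD : IsCompact D) {I : Set ℝ} (hI : IsCompact I)
    {O : Set X} (hO : IsOpen O) (h0O : ∀ x ∈ D, ∀ t ∈ I, φ 0 x t ∈ O) :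
    ∃ δ > 0, ∀ l ∈ Icc (0:ℝ) 1, l ≤ δ → ∀ x ∈ D, ∀ t ∈ I, φ l x t ∈ O := by
  by_contra hcon
  push_neg at hcon
  have hwit : ∀ j : ℕ, ∃ l ∈ Icc (0:ℝ) 1, l ≤ 1/(j+1) ∧
      ∃ x ∈ D, ∃ t ∈ I, φ l x t ∉ O := by
    intro j
    obtain ⟨l, hl1, hl2, h⟩ := hcon (1/(j+1)) (by positivity)
    exact ⟨l, hl1, hl2, h⟩
  choose ls hls1 hls2 xs hxs tts htts hout using hwit
  have hmem : ∀ j, (xs j, tts j) ∈ D ×ˢ I := fun j => mk_mem_prod (hxs j) (htts j)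
  obtain ⟨⟨x, t⟩, hxt, σ, hσ, hconv⟩ := (hD.prod hI).tendsto_subseq hmem
  have hl0 : Tendsto (fun k => ls (σ k)) atTop (𝓝 0) := by
    apply squeeze_zero (fun k => (hls1 (σ k)).1)
      (fun k => le_trans (hls2 (σ k)) ?_) tendsto_one_div_add_atTop_nhds_zero_nat
    gcongr
    exact_mod_cast hσ.le_apply
  have hxconv : Tendsto (fun k => xs (σ k)) atTop (𝓝 x) :=
    (continuous_fst.tendsto _).comp hconv
  have htconv : Tendsto (fun k => tts (σ k)) atTop (𝓝 t) :=
    (continuous_snd.tendsto _).comp hconv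
  have htend : Tendsto (fun k => φ (ls (σ k)) (xs (σ k)) (tts (σ k))) atTop
      (𝓝 (φ 0 x t)) :=
    param_tendsto hφc (fun k => hls1 (σ k)) ⟨le_rfl, zero_le_one⟩ hl0 hxconv htconv
  have hlim : φ 0 x t ∈ Oᶜ :=
    hO.isClosed_compl.mem_of_tendsto htend
      (Filter.Eventually.of_forall (fun k => hout (σ k)))
  exact hlim (h0O x hxt.1 t hxt.2)

/-- robustness of the maximal invariant set inside a compact set. -/
lemma param_inv_robust
    (hφc : ContinuousOn (fun p : ℝ × X × ℝ => φ p.1 p.2.1 p.2.2)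
      ((Icc 0 1 : Set ℝ) ×ˢ (univ : Set (X × ℝ))))
    (hflow0 : ∀ l ∈ Icc (0:ℝ) 1, ∀ x : X, φ l x 0 = x)
    {N : Set X} (hN : IsCompact N) {l₀ : ℝ} (hl₀ : l₀ ∈ Icc (0:ℝ) 1)
    {U : Set X} (hU : IsOpen U) (hIU : finv (φ l₀) N ⊆ U) :
    ∃ δ > 0, ∀ l ∈ Icc (0:ℝ) 1, |l - l₀| < δ → finv (φ l) N ⊆ U := by
  by_contra hcon
  push_neg at hcon
  have hwit : ∀ j : ℕ, ∃ l ∈ Icc (0:ℝ) 1, |l - l₀| < 1/(j+1) ∧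
      ∃ x, x ∈ finv (φ l) N ∧ x ∉ U := by
    intro j
    obtain ⟨l, hl1, hl2, h⟩ := hcon (1/(j+1)) (by positivity)
    rw [not_subset] at h
    obtain ⟨x, hx1, hx2⟩ := h
    exact ⟨l, hl1, hl2, x, hx1, hx2⟩
  choose ls hls1 hlsd xs hxs hxout using hwit
  have hmemN : ∀ j, xs j ∈ N := by
    intro j
    have := hxs j 0
    rwa [hflow0 (ls j) (hls1 j)] at this
  obtain ⟨x, hxN, σ, hσ, hconv⟩ := hN.tendsto_subseq hmemN
  have hlconv : Tendsto (fun k => ls (σ k)) atTop (𝓝 l₀) := by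
    rw [tendsto_iff_dist_tendsto_zero]
    apply squeeze_zero (fun k => dist_nonneg)
      (fun k => ?_) tendsto_one_div_add_atTop_nhds_zero_nat
    rw [Real.dist_eq]
    refine le_trans (hlsd (σ k)).le ?_
    gcongr
    exact_mod_cast hσ.le_apply
  have hxinv : x ∈ finv (φ l₀) N := by
    intro t
    have htend : Tendsto (fun k => φ (ls (σ k)) (xs (σ k)) t) atTop (𝓝 (φ l₀ x t)) :=
      param_tendsto hφc (fun k => hls1 (σ k)) hl₀ hlconv hconv tendsto_const_nhds
    exact hN.isClosed.mem_of_tendsto htend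
      (Filter.Eventually.of_forall (fun k => hxs (σ k) t))
  have hxU : x ∈ Uᶜ :=
    hU.isClosed_compl.mem_of_tendsto hconv
      (Filter.Eventually.of_forall (fun k => hxout (σ k)))
  exact hxU (hIU hxinv)

end PolarAux
open PolarAux in
/-- A parametrized family of dissipative flows on `ℝⁿ` is polar if and
only if for every continuation `(K_λ)` of the global attractor `K₀` of `φ₀` there is
`λ₀ > 0` such that `K_λ` is not a global attractor for every `0 < λ < λ₀`. -/
theorem polar_iff_continuation_not_global {n : ℕ}
    (φ : ℝ → EuclideanSpace ℝ (Fin n) → ℝ → EuclideanSpace ℝ (Fin n))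
    (hφ : IsParamFlow φ)
    (hdiss : ∀ l ∈ Icc (0 : ℝ) 1, Dissipative (φ l)) :
    PolarFamily φ ↔
      ∀ lam1 ∈ Ioc (0 : ℝ) 1, ∀ K : ℝ → Set (EuclideanSpace ℝ (Fin n)),
        IsContinuation φ (Icc 0 lam1) K → IsGlobalAttractor (φ 0) (K 0) →
          ∃ lam0, 0 < lam0 ∧ lam0 ≤ lam1 ∧ ∀ l, 0 < l → l < lam0 →
            ¬ IsGlobalAttractor (φ l) (K l) := by
  constructor
  · -- Forward direction: polar implies every continuation loses global attractivity.
    intro hPol lam1 hlam1 K hKcont hK0GA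
    obtain ⟨hKiso, hKrob⟩ := hKcont
    have h0J : (0:ℝ) ∈ Icc 0 lam1 := ⟨le_refl 0, hlam1.1.le⟩
    obtain ⟨hK0cpt, hK0inv, N, hN⟩ := hKiso 0 h0J
    obtain ⟨RN, hRN⟩ := isBounded_iff_forall_norm_le.1 hN.1.isBounded
    have hLpos : (0:ℝ) < max RN 0 + 2 := by positivity
    obtain ⟨lam0p, hlam0p, hpol⟩ := hPol (max RN 0 + 2) hLpos
    obtain ⟨δ, hδpos, hδ⟩ := hKrob 0 h0J N hN
    refine ⟨min lam0p (min δ lam1), lt_min hlam0p (lt_min hδpos hlam1.1),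
      le_trans (min_le_right _ _) (min_le_right _ _), ?_⟩
    intro l hl0 hllt
    have hllam1 : l ≤ lam1 :=
      (lt_of_lt_of_le hllt (le_trans (min_le_right _ _) (min_le_right _ _))).le
    have hl1 : l ≤ 1 := le_trans hllam1 hlam1.2
    have hl01 : l ∈ Icc (0:ℝ) 1 := ⟨hl0.le, hl1⟩
    have hlJ : l ∈ Icc 0 lam1 := ⟨hl0.le, hllam1⟩
    have hNl := hδ l hlJ (by
      rw [sub_zero, abs_of_nonneg hl0.le]
      exact lt_of_lt_of_le hllt (le_trans (min_le_right _ _) (min_le_left _ _)))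
    obtain ⟨x, hxb, tl, htl, hesc⟩ := hpol l hl0
      (lt_of_lt_of_le hllt (min_le_left _ _)) hl1
    intro hGA
    obtain ⟨hc_l, h0_l, hadd_l⟩ := hφ.2 l hl01
    have hyb : IsBounded (range (φ l (φ l x (tl - 1)))) := by
      rw [PolarAux.range_shift hadd_l]; exact hxb
    obtain ⟨k, hkK, hdist⟩ := PolarAux.global_attractor_absorbs (hφ.2 l hl01)
      (hdiss l hl01).1 hGA hyb
    have hkN : k ∈ N := interior_subset (hNl.2.1 hkK)
    have hnk := hRN k hkN
    have hy := hesc (tl - 1) (by linarith)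
    have htri : ‖φ l x (tl-1)‖ ≤ ‖k‖ + ‖φ l x (tl-1) - k‖ := by
      simpa using norm_add_le k (φ l x (tl-1) - k)
    rw [← dist_eq_norm] at htri
    have hmax : RN ≤ max RN 0 := le_max_left _ _
    linarith
  · -- Backward direction.
    intro hRHS L hLpos
    have h0mem : (0:ℝ) ∈ Icc (0:ℝ) 1 := ⟨le_refl 0, zero_le_one⟩
    have hflow0 : ∀ l ∈ Icc (0:ℝ) 1, ∀ x : EuclideanSpace ℝ (Fin n), φ l x 0 = x :=
      fun l hl => (hφ.2 l hl).2.1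
    obtain ⟨hc0, h00, hadd0⟩ := hφ.2 0 h0mem
    have hd0 := hdiss 0 h0mem
    obtain ⟨RC, hRC⟩ := isBounded_iff_forall_norm_le.1 hd0.2.isBounded
    have hCne : (closure (⋃ x, omegaLimitSet (φ 0) x)).Nonempty := by
      obtain ⟨w, hw⟩ := hd0.1 0
      exact ⟨w, PolarAux.omega_subset_C 0 hw⟩
    -- the unit neighborhood of `C` lies in any sufficiently large ball
    have hCball : ∀ R : ℝ, max RC 0 + 2 ≤ R →
        {y | infDist y (closure (⋃ x, omegaLimitSet (φ 0) x)) < 1} ⊆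
          interior (closedBall (0 : EuclideanSpace ℝ (Fin n)) R) := by
      intro R hR y hy
      obtain ⟨c, hcC, hdc⟩ := (infDist_lt_iff hCne).1 hy
      have hRpos : (0:ℝ) < R := by
        have : (0:ℝ) ≤ max RC 0 := le_max_right _ _
        linarith
      rw [interior_closedBall _ (ne_of_gt hRpos), mem_ball, dist_zero_right]
      have h1 : ‖y‖ ≤ ‖c‖ + ‖y - c‖ := by simpa using norm_add_le c (y - c)
      rw [← dist_eq_norm] at h1
      have h3 := hRC c hcC
      have h4 : RC ≤ max RC 0 := le_max_left _ _
      linarith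
    -- Pliss bound from the basic ball
    have hfw1 : IsBounded (ftl (φ 0) (closedBall 0 (max RC 0 + 2)) 0) :=
      PolarAux.pliss hc0 h00 hadd0 hd0 (isCompact_closedBall _ _)
        (hCball (max RC 0 + 2) le_rfl)
    obtain ⟨RP0, hRP0⟩ := isBounded_iff_forall_norm_le.1 hfw1
    set RP : ℝ := max RP0 (max RC 0 + 2) with hRPdef
    have hMsub : mset (φ 0) ⊆ closedBall (0 : EuclideanSpace ℝ (Fin n)) RP := by
      intro x hx
      have hmem := PolarAux.mset_sub_ftl hc0 h00 hadd0 hd0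
        (hCball (max RC 0 + 2) le_rfl) hx
      rw [mem_closedBall, dist_zero_right]
      exact le_trans (hRP0 x hmem) (le_max_left _ _)
    have hRPnn : (0:ℝ) ≤ RP := by
      have h1 : (0:ℝ) ≤ max RC 0 := le_max_right _ _
      have h2 : max RC 0 + 2 ≤ RP := le_max_right _ _
      linarith
    -- the first absorbing ball D
    set RD : ℝ := max (max (RP + 2) (L + 1)) (max RC 0 + 2) with hRDdef
    have hR1RD : max RC 0 + 2 ≤ RD := le_max_right _ _
    have hRPRD : RP + 2 ≤ RD := le_trans (le_max_left _ _) (le_max_left _ _)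
    have hLRD : L + 1 ≤ RD := le_trans (le_max_right _ _) (le_max_left _ _)
    have hfwD : IsBounded (ftl (φ 0) (closedBall 0 RD) 0) :=
      PolarAux.pliss hc0 h00 hadd0 hd0 (isCompact_closedBall _ _) (hCball RD hR1RD)
    obtain ⟨RE0, hRE0⟩ := isBounded_iff_forall_norm_le.1 hfwD
    set RE : ℝ := max RE0 RD with hREdef
    have hRDRE : RD ≤ RE := le_max_right _ _
    have hfwDcb : ftl (φ 0) (closedBall 0 RD) 0 ⊆
        closedBall (0 : EuclideanSpace ℝ (Fin n)) RE := by
      intro y hy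
      rw [mem_closedBall, dist_zero_right]
      exact le_trans (hRE0 y hy) (le_max_left _ _)
    have hRDpos : (0:ℝ) < RD := by
      have : (0:ℝ) ≤ max RC 0 := le_max_right _ _
      linarith
    -- global attractor of φ 0
    have hMD : mset (φ 0) ⊆ interior (closedBall (0 : EuclideanSpace ℝ (Fin n)) RD) := by
      rw [interior_closedBall _ (ne_of_gt hRDpos)]
      refine hMsub.trans (closedBall_subset_ball ?_)
      linarith
    have hGA0 : IsGlobalAttractor (φ 0) (mset (φ 0)) :=
      PolarAux.global_attractor_mset hc0 h00 hadd0 hd0 (isCompact_closedBall _ _)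
        hMD hfwD
    have hMne : (mset (φ 0)).Nonempty := by
      obtain ⟨w, hw⟩ := hd0.1 0
      exact ⟨w, PolarAux.omega_subset_mset hc0 h00 hadd0 hd0 0 hw⟩
    -- the target neighborhood W of the attractor
    have hWopen : IsOpen {y : EuclideanSpace ℝ (Fin n) | infDist y (mset (φ 0)) < 1} :=
      isOpen_lt (continuous_infDist_pt _) continuous_const
    have hMW : mset (φ 0) ⊆ {y | infDist y (mset (φ 0)) < 1} := by
      intro x hx
      show infDist x (mset (φ 0)) < 1
      rw [infDist_zero_of_mem hx]; norm_num
    have hWb : {y : EuclideanSpace ℝ (Fin n) | infDist y (mset (φ 0)) < 1} ⊆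
        closedBall 0 (RP + 1) := by
      intro y hy
      obtain ⟨m, hm, hdm⟩ := (infDist_lt_iff hMne).1 hy
      rw [mem_closedBall, dist_zero_right]
      have h1 : ‖y‖ ≤ ‖m‖ + ‖y - m‖ := by simpa using norm_add_le m (y - m)
      rw [← dist_eq_norm] at h1
      have h2 := hMsub hm
      rw [mem_closedBall, dist_zero_right] at h2
      linarith
    have hWD : {y : EuclideanSpace ℝ (Fin n) | infDist y (mset (φ 0)) < 1} ⊆
        closedBall 0 RD :=
      hWb.trans (closedBall_subset_closedBall (by linarith))
    -- uniform attraction toward W for φ 0 from D, and robustness in the parameter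
    obtain ⟨T₀, hT₀0, hT₀⟩ := PolarAux.uniform_attraction hc0 hfwD hWopen
      ((PolarAux.fom_sub_mset hc0 h00 hadd0 hfwD).trans hMW)
    have hTpos : (0:ℝ) < T₀ + 1 := by linarith
    have h0W : ∀ x ∈ closedBall (0 : EuclideanSpace ℝ (Fin n)) RD,
        ∀ t ∈ Icc (T₀+1) (2*(T₀+1)), φ 0 x t ∈
          {y | infDist y (mset (φ 0)) < 1} :=
      fun x hx t ht => hT₀ x hx t (by linarith [ht.1])
    have h0B : ∀ x ∈ closedBall (0 : EuclideanSpace ℝ (Fin n)) RD,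
        ∀ t ∈ Icc (0:ℝ) (2*(T₀+1)), φ 0 x t ∈
          ball (0 : EuclideanSpace ℝ (Fin n)) (RE + 1) := by
      intro x hx t ht
      have : φ 0 x t ∈ ftl (φ 0) (closedBall 0 RD) 0 :=
        mem_ftl.2 ⟨x, hx, t, ht.1, rfl⟩
      have := hfwDcb this
      rw [mem_closedBall, dist_zero_right] at this
      rw [mem_ball, dist_zero_right]
      linarith
    obtain ⟨δ₁, hδ₁pos, hδ₁⟩ := PolarAux.param_robust hφ.1 (isCompact_closedBall _ _)
      isCompact_Icc hWopen h0W
    obtain ⟨δ₂, hδ₂pos, hδ₂⟩ := PolarAux.param_robust hφ.1 (isCompact_closedBall _ _)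
      isCompact_Icc isOpen_ball h0B
    -- uniform forward bound from D for small l
    have hfwl : ∀ l ∈ Icc (0:ℝ) 1, l ≤ δ₁ → l ≤ δ₂ →
        ftl (φ l) (closedBall 0 RD) 0 ⊆
          closedBall (0 : EuclideanSpace ℝ (Fin n)) (RE + 1) := by
      intro l hl hle1 hle2
      obtain ⟨hcl, h0l, haddl⟩ := hφ.2 l hl
      have hsub := PolarAux.ftl_bound h0l haddl hWD hTpos
        (fun x hx t ht1 ht2 => hδ₁ l hl hle1 x hx t ⟨ht1, ht2⟩)
        (fun x hx t ht1 ht2 => hδ₂ l hl hle2 x hx t ⟨ht1, ht2⟩)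
      refine hsub.trans ?_
      rintro y (h | h)
      · exact closedBall_subset_closedBall (by linarith) (hWb h)
      · exact ball_subset_closedBall h
    -- second level: the ball D2 containing all these forward orbits
    have hR1RD2 : max RC 0 + 2 ≤ RE + 1 + 2 := by linarith
    have hfwD2 : IsBounded (ftl (φ 0) (closedBall 0 (RE+1+2)) 0) :=
      PolarAux.pliss hc0 h00 hadd0 hd0 (isCompact_closedBall _ _) (hCball _ hR1RD2)
    obtain ⟨RE20, hRE20⟩ := isBounded_iff_forall_norm_le.1 hfwD2
    set RE2 : ℝ := max RE20 (RE+1+2) with hRE2def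
    have hRE2ge : RE+1+2 ≤ RE2 := le_max_right _ _
    have hfwD2cb : ftl (φ 0) (closedBall 0 (RE+1+2)) 0 ⊆
        closedBall (0 : EuclideanSpace ℝ (Fin n)) RE2 := by
      intro y hy
      rw [mem_closedBall, dist_zero_right]
      exact le_trans (hRE20 y hy) (le_max_left _ _)
    obtain ⟨T₂, hT₂0, hT₂⟩ := PolarAux.uniform_attraction hc0 hfwD2 hWopen
      ((PolarAux.fom_sub_mset hc0 h00 hadd0 hfwD2).trans hMW)
    have hT2pos : (0:ℝ) < T₂ + 1 := by linarith
    have h0W2 : ∀ x ∈ closedBall (0 : EuclideanSpace ℝ (Fin n)) (RE+1+2),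
        ∀ t ∈ Icc (T₂+1) (2*(T₂+1)), φ 0 x t ∈
          {y | infDist y (mset (φ 0)) < 1} :=
      fun x hx t ht => hT₂ x hx t (by linarith [ht.1])
    have h0B2 : ∀ x ∈ closedBall (0 : EuclideanSpace ℝ (Fin n)) (RE+1+2),
        ∀ t ∈ Icc (0:ℝ) (2*(T₂+1)), φ 0 x t ∈
          ball (0 : EuclideanSpace ℝ (Fin n)) (RE2 + 1) := by
      intro x hx t ht
      have : φ 0 x t ∈ ftl (φ 0) (closedBall 0 (RE+1+2)) 0 :=
        mem_ftl.2 ⟨x, hx, t, ht.1, rfl⟩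
      have := hfwD2cb this
      rw [mem_closedBall, dist_zero_right] at this
      rw [mem_ball, dist_zero_right]
      linarith
    obtain ⟨δ₃, hδ₃pos, hδ₃⟩ := PolarAux.param_robust hφ.1 (isCompact_closedBall _ _)
      isCompact_Icc hWopen h0W2
    obtain ⟨δ₄, hδ₄pos, hδ₄⟩ := PolarAux.param_robust hφ.1 (isCompact_closedBall _ _)
      isCompact_Icc isOpen_ball h0B2
    have hWD2 : {y : EuclideanSpace ℝ (Fin n) | infDist y (mset (φ 0)) < 1} ⊆
        closedBall 0 (RE+1+2) :=
      hWb.trans (closedBall_subset_closedBall (by linarith))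
    have hfwl2 : ∀ l ∈ Icc (0:ℝ) 1, l ≤ δ₃ → l ≤ δ₄ →
        ftl (φ l) (closedBall 0 (RE+1+2)) 0 ⊆
          closedBall (0 : EuclideanSpace ℝ (Fin n)) (RE2 + 1) := by
      intro l hl hle3 hle4
      obtain ⟨hcl, h0l, haddl⟩ := hφ.2 l hl
      have hsub := PolarAux.ftl_bound h0l haddl hWD2 hT2pos
        (fun x hx t ht1 ht2 => hδ₃ l hl hle3 x hx t ⟨ht1, ht2⟩)
        (fun x hx t ht1 ht2 => hδ₄ l hl hle4 x hx t ⟨ht1, ht2⟩)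
      refine hsub.trans ?_
      rintro y (h | h)
      · exact closedBall_subset_closedBall (by linarith) (hWb h)
      · exact ball_subset_closedBall h
    -- the isolating neighborhood N for the continuation
    have hRN'pos : (0:ℝ) < RE2 + 3 := by linarith
    have hK0eq : finv (φ 0) (closedBall (0 : EuclideanSpace ℝ (Fin n)) (RE2+3)) =
        mset (φ 0) := by
      apply subset_antisymm
      · exact PolarAux.finv_sub_mset h00 hadd0 isBounded_closedBall
      · exact PolarAux.subset_finv (PolarAux.mset_invariant h00 hadd0)
          (hMsub.trans (closedBall_subset_closedBall (by linarith)))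
    have hIntN : finv (φ 0) (closedBall (0 : EuclideanSpace ℝ (Fin n)) (RE2+3)) ⊆
        ball (0 : EuclideanSpace ℝ (Fin n)) (RE2+3) := by
      rw [hK0eq]
      exact hMsub.trans (closedBall_subset_ball (by linarith))
    obtain ⟨δ₀, hδ₀pos, hδ₀⟩ := PolarAux.param_inv_robust hφ.1 hflow0
      (isCompact_closedBall _ _) h0mem isOpen_ball hIntN
    set lam1 : ℝ := min (min (δ₀/2) (min δ₁ δ₂)) (min (min δ₃ δ₄) 1) with hlam1def
    have hlam1pos : 0 < lam1 :=
      lt_min (lt_min (by linarith) (lt_min hδ₁pos hδ₂pos))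
        (lt_min (lt_min hδ₃pos hδ₄pos) one_pos)
    have hlam1le1 : lam1 ≤ 1 := le_trans (min_le_right _ _) (min_le_right _ _)
    have hJsub : Icc (0:ℝ) lam1 ⊆ Icc (0:ℝ) 1 :=
      fun l hl => ⟨hl.1, le_trans hl.2 hlam1le1⟩
    have hInvBall : ∀ l ∈ Icc (0:ℝ) lam1,
        finv (φ l) (closedBall (0 : EuclideanSpace ℝ (Fin n)) (RE2+3)) ⊆
          ball (0 : EuclideanSpace ℝ (Fin n)) (RE2+3) := by
      intro l hl
      apply hδ₀ l (hJsub hl)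
      rw [sub_zero, abs_of_nonneg hl.1]
      have h1 : l ≤ lam1 := hl.2
      have h2 : lam1 ≤ δ₀/2 := le_trans (min_le_left _ _) (min_le_left _ _)
      linarith
    have hIntNN : ball (0 : EuclideanSpace ℝ (Fin n)) (RE2+3) =
        interior (closedBall (0 : EuclideanSpace ℝ (Fin n)) (RE2+3)) :=
      (interior_closedBall _ (ne_of_gt hRN'pos)).symm
    -- the continuation K
    have hKinva : ∀ l ∈ Icc (0:ℝ) 1,
        FlowInvariant (φ l) (finv (φ l) (closedBall (0 : EuclideanSpace ℝ (Fin n)) (RE2+3))) :=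
      fun l hl => PolarAux.finv_invariant (hφ.2 l hl).2.1 (hφ.2 l hl).2.2 _
    have hKiso : ∀ l ∈ Icc (0:ℝ) lam1, IsIsolatedInvariant (φ l)
        (finv (φ l) (closedBall (0 : EuclideanSpace ℝ (Fin n)) (RE2+3))) := by
      intro l hl
      obtain ⟨hcl, h0l, haddl⟩ := hφ.2 l (hJsub hl)
      have hKcpt : IsCompact (finv (φ l) (closedBall (0 : EuclideanSpace ℝ (Fin n)) (RE2+3))) :=
        isCompact_of_isClosed_isBounded (PolarAux.finv_isClosed hcl Metric.isClosed_closedBall)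
          (isBounded_closedBall.subset (PolarAux.finv_subset h0l))
      refine ⟨hKcpt, hKinva l (hJsub hl), closedBall 0 (RE2+3),
        isCompact_closedBall _ _, ?_, hKinva l (hJsub hl), ?_⟩
      · rw [← hIntNN]; exact hInvBall l hl
      · intro S hS hSN
        exact PolarAux.subset_finv hS hSN
    have hKcont : IsContinuation φ (Icc 0 lam1)
        (fun l => finv (φ l) (closedBall (0 : EuclideanSpace ℝ (Fin n)) (RE2+3))) := by
      refine ⟨hKiso, ?_⟩
      intro l₀ hl₀ N' hN'
      obtain ⟨hN'cpt, hKN'int, _, hN'max⟩ := hN'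
      have hKl₀N' : finv (φ l₀) (closedBall (0 : EuclideanSpace ℝ (Fin n)) (RE2+3)) =
          finv (φ l₀) N' := by
        apply subset_antisymm
        · exact PolarAux.subset_finv (hKinva l₀ (hJsub hl₀))
            (hKN'int.trans interior_subset)
        · exact hN'max _ (PolarAux.finv_invariant (hφ.2 l₀ (hJsub hl₀)).2.1
            (hφ.2 l₀ (hJsub hl₀)).2.2 N') (PolarAux.finv_subset (hφ.2 l₀ (hJsub hl₀)).2.1)
      obtain ⟨δa, hδapos, hδa⟩ := PolarAux.param_inv_robust hφ.1 hflow0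
        (isCompact_closedBall _ _) (hJsub hl₀) isOpen_interior hKN'int
      obtain ⟨δb, hδbpos, hδb⟩ := PolarAux.param_inv_robust hφ.1 hflow0
        hN'cpt (hJsub hl₀) isOpen_ball (by rw [← hKl₀N']; exact hInvBall l₀ hl₀)
      refine ⟨min δa δb, lt_min hδapos hδbpos, ?_⟩
      intro l hlJ hld
      refine ⟨hN'cpt, ?_, hKinva l (hJsub hlJ), ?_⟩
      · exact hδa l (hJsub hlJ) (lt_of_lt_of_le hld (min_le_left _ _))
      · intro S hS hSN'
        have h1 : S ⊆ finv (φ l) N' := PolarAux.subset_finv hS hSN'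
        have h2 : finv (φ l) N' ⊆ ball (0 : EuclideanSpace ℝ (Fin n)) (RE2+3) :=
          hδb l (hJsub hlJ) (lt_of_lt_of_le hld (min_le_right _ _))
        exact PolarAux.subset_finv hS ((h1.trans h2).trans ball_subset_closedBall)
    -- apply the hypothesis to this continuation
    have hGA0' : IsGlobalAttractor (φ 0)
        (finv (φ 0) (closedBall (0 : EuclideanSpace ℝ (Fin n)) (RE2+3))) := by
      rw [hK0eq]; exact hGA0
    obtain ⟨lam0, hlam0pos, hlam0le, hnot⟩ :=
      hRHS lam1 ⟨hlam1pos, hlam1le1⟩ _ hKcont hGA0'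
    refine ⟨lam0, hlam0pos, ?_⟩
    intro l hl0 hllam0 _
    by_contra hno
    push_neg at hno
    have hlJ : l ∈ Icc (0:ℝ) lam1 := ⟨hl0.le, (lt_of_lt_of_le hllam0 hlam0le).le⟩
    have hl01 := hJsub hlJ
    obtain ⟨hcl, h0l, haddl⟩ := hφ.2 l hl01
    have hdl := hdiss l hl01
    have hle1 : l ≤ δ₁ := le_trans hlJ.2 (le_trans (min_le_left _ _)
      (le_trans (min_le_right _ _) (min_le_left _ _)))
    have hle2 : l ≤ δ₂ := le_trans hlJ.2 (le_trans (min_le_left _ _)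
      (le_trans (min_le_right _ _) (min_le_right _ _)))
    have hle3 : l ≤ δ₃ := le_trans hlJ.2 (le_trans (min_le_right _ _)
      (le_trans (min_le_left _ _) (min_le_left _ _)))
    have hle4 : l ≤ δ₄ := le_trans hlJ.2 (le_trans (min_le_right _ _)
      (le_trans (min_le_left _ _) (min_le_right _ _)))
    -- under the no-escape assumption all bounded orbits pass through the ball of radius L
    have hMl : mset (φ l) ⊆ closedBall (0 : EuclideanSpace ℝ (Fin n)) (RE+1) := by
      intro x hx
      obtain ⟨t, htlt, htL⟩ := hno x hx (-1) (by norm_num)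
      have hyD : φ l x t ∈ closedBall (0 : EuclideanSpace ℝ (Fin n)) RD := by
        rw [mem_closedBall, dist_zero_right]
        linarith
      have hxeq : φ l (φ l x t) (-t) = x := by
        rw [haddl, add_neg_cancel, h0l]
      have hmem : x ∈ ftl (φ l) (closedBall 0 RD) 0 :=
        mem_ftl.2 ⟨φ l x t, hyD, -t, by linarith, hxeq⟩
      exact hfwl l hl01 hle1 hle2 hmem
    -- hence the maximal bounded invariant set is a global attractor of φ l
    have hMD2 : mset (φ l) ⊆
        interior (closedBall (0 : EuclideanSpace ℝ (Fin n)) (RE+1+2)) := by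
      rw [interior_closedBall _ (by positivity : (RE+1+2 : ℝ) ≠ 0)]
      exact hMl.trans (closedBall_subset_ball (by linarith))
    have hGAl : IsGlobalAttractor (φ l) (mset (φ l)) :=
      PolarAux.global_attractor_mset hcl h0l haddl hdl (isCompact_closedBall _ _)
        hMD2 (isBounded_closedBall.subset (hfwl2 l hl01 hle3 hle4))
    have hKleq : finv (φ l) (closedBall (0 : EuclideanSpace ℝ (Fin n)) (RE2+3)) =
        mset (φ l) := by
      apply subset_antisymm
      · exact PolarAux.finv_sub_mset h0l haddl isBounded_closedBall
      · exact PolarAux.subset_finv (PolarAux.mset_invariant h0l haddl)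
          (hMl.trans (closedBall_subset_closedBall (by linarith)))
    refine hnot l hl0 hllam0 ?_
    show IsGlobalAttractor (φ l)
      (finv (φ l) (closedBall (0 : EuclideanSpace ℝ (Fin n)) (RE2+3)))
    rw [hKleq]
    exact hGAl
end

section
/- Let φ_λ : ℝⁿ × ℝ → ℝⁿ, λ ∈ [0,1], be a polar family of dissipative flows, K_0 the global attractor of φ_0, and (K_λ)_{λ∈[0,λ₁]} a continuation of K_0. Then there exists λ₀ > 0 such that for every λ with 0 < λ < λ₀ there is a maximal compact invariant set C_λ of φ_λ contained in ℝⁿ ∖ K_λ (i.e. C_λ is compact, invariant, contained in ℝⁿ ∖ K_λ, and contains every compact invariant set of φ_λ contained in ℝⁿ ∖ K_λ); moreover C_λ is nonempty and is an isolated invariant set. -/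
open Set Metric Filter Topology Bornology

section FlowRoot

variable {E : Type*} [NormedAddCommGroup E]

lemma IsFlow.contE {ψ : E → ℝ → E} (hψ : IsFlow ψ) :
    Continuous (fun p : E × ℝ => ψ p.1 p.2) := hψ.1

lemma IsFlow.zeroE {ψ : E → ℝ → E} (hψ : IsFlow ψ) (x : E) : ψ x 0 = x := hψ.2.1 x

lemma IsFlow.addE {ψ : E → ℝ → E} (hψ : IsFlow ψ) (x : E) (s t : ℝ) :
    ψ (ψ x s) t = ψ x (s + t) := hψ.2.2 x s t

lemma IsFlow.cont_x {ψ : E → ℝ → E} (hψ : IsFlow ψ) (t : ℝ) :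
    Continuous (fun x => ψ x t) :=
  hψ.1.comp (continuous_id.prodMk continuous_const)

lemma IsFlow.cont_t {ψ : E → ℝ → E} (hψ : IsFlow ψ) (x : E) :
    Continuous (ψ x) :=
  hψ.1.comp (continuous_const.prodMk continuous_id)

end FlowRoot

namespace Stmt13Aux

variable {E : Type*} [NormedAddCommGroup E]

lemma mem_omega {ψ : E → ℝ → E} {x p : E} :
    p ∈ omegaLimitSet ψ x ↔ ∀ t : ℝ, 0 < t → p ∈ closure (ψ x '' Ici t) := by
  simp [omegaLimitSet]

lemma mem_negOmega {ψ : E → ℝ → E} {x p : E} :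
    p ∈ negOmegaLimitSet ψ x ↔ ∀ t : ℝ, t < 0 → p ∈ closure (ψ x '' Iic t) := by
  simp [negOmegaLimitSet]

lemma omega_subset {ψ : E → ℝ → E} (x : E) {t : ℝ} (ht : 0 < t) :
    omegaLimitSet ψ x ⊆ closure (ψ x '' Ici t) :=
  fun _ hp => mem_omega.mp hp t ht

lemma negOmega_subset {ψ : E → ℝ → E} (x : E) {t : ℝ} (ht : t < 0) :
    negOmegaLimitSet ψ x ⊆ closure (ψ x '' Iic t) :=
  fun _ hp => mem_negOmega.mp hp t ht

lemma omega_isClosed {ψ : E → ℝ → E} (x : E) : IsClosed (omegaLimitSet ψ x) :=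
  isClosed_biInter fun _ _ => isClosed_closure

lemma negOmega_isClosed {ψ : E → ℝ → E} (x : E) : IsClosed (negOmegaLimitSet ψ x) :=
  isClosed_biInter fun _ _ => isClosed_closure

/-- The omega-limit set is closed under the flow. -/
lemma omega_orbit {ψ : E → ℝ → E} (hψ : IsFlow ψ) {x p : E}
    (hp : p ∈ omegaLimitSet ψ x) (s : ℝ) : ψ p s ∈ omegaLimitSet ψ x := by
  rw [mem_omega] at hp ⊢
  intro t ht
  rw [_root_.mem_closure_iff]
  intro O hO hmemO
  have h1 : (0:ℝ) < t + |s| + 1 := by positivity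
  have hmem := hp _ h1
  rw [_root_.mem_closure_iff] at hmem
  obtain ⟨y, hyO, hyimg⟩ := hmem _ (hO.preimage (hψ.cont_x s)) hmemO
  obtain ⟨r, hr, rfl⟩ := hyimg
  refine ⟨ψ x (r + s), ?_, ⟨r + s, ?_, rfl⟩⟩
  · simp only [mem_preimage] at hyO
    rwa [hψ.addE x r s] at hyO
  · have := abs_nonneg s
    have := neg_abs_le s
    simp only [mem_Ici] at hr ⊢
    linarith

lemma negOmega_orbit {ψ : E → ℝ → E} (hψ : IsFlow ψ) {x p : E}
    (hp : p ∈ negOmegaLimitSet ψ x) (s : ℝ) : ψ p s ∈ negOmegaLimitSet ψ x := by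
  rw [mem_negOmega] at hp ⊢
  intro t ht
  rw [_root_.mem_closure_iff]
  intro O hO hmemO
  have h1 : t - |s| - 1 < 0 := by
    have := abs_nonneg s; linarith
  have hmem := hp _ h1
  rw [_root_.mem_closure_iff] at hmem
  obtain ⟨y, hyO, hyimg⟩ := hmem _ (hO.preimage (hψ.cont_x s)) hmemO
  obtain ⟨r, hr, rfl⟩ := hyimg
  refine ⟨ψ x (r + s), ?_, ⟨r + s, ?_, rfl⟩⟩
  · simp only [mem_preimage] at hyO
    rwa [hψ.addE x r s] at hyO
  · have := neg_abs_le s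
    have := le_abs_self s
    simp only [mem_Iic] at hr ⊢
    linarith

/-- A set closed under the flow in both time directions is invariant. -/
lemma flowInvariant_of_mapsTo {ψ : E → ℝ → E} (hψ : IsFlow ψ) {S : Set E}
    (h : ∀ x ∈ S, ∀ t : ℝ, ψ x t ∈ S) : FlowInvariant ψ S := by
  intro t
  apply subset_antisymm
  · rintro _ ⟨x, hx, rfl⟩; exact h x hx t
  · intro x hx
    refine ⟨ψ x (-t), h x hx (-t), ?_⟩
    show ψ (ψ x (-t)) t = x
    rw [hψ.addE, neg_add_cancel, hψ.zeroE]

lemma FlowInvariant.memE {ψ : E → ℝ → E} {S : Set E} (hS : FlowInvariant ψ S)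
    {x : E} (hx : x ∈ S) (t : ℝ) : ψ x t ∈ S := by
  have := hS t
  rw [← this]
  exact ⟨x, hx, rfl⟩

lemma omega_flowInvariant {ψ : E → ℝ → E} (hψ : IsFlow ψ) (x : E) :
    FlowInvariant ψ (omegaLimitSet ψ x) :=
  flowInvariant_of_mapsTo hψ fun _ hp t => omega_orbit hψ hp t

lemma negOmega_flowInvariant {ψ : E → ℝ → E} (hψ : IsFlow ψ) (x : E) :
    FlowInvariant ψ (negOmegaLimitSet ψ x) :=
  flowInvariant_of_mapsTo hψ fun _ hp t => negOmega_orbit hψ hp t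

lemma image_Ici_shift {ψ : E → ℝ → E} (hψ : IsFlow ψ) (x : E) (s t : ℝ) :
    (fun r => ψ (ψ x s) r) '' Ici t = ψ x '' Ici (s + t) := by
  ext y
  constructor
  · rintro ⟨r, hr, rfl⟩
    exact ⟨s + r, by simp only [mem_Ici] at hr ⊢; linarith, (hψ.addE x s r).symm⟩
  · rintro ⟨u, hu, rfl⟩
    refine ⟨u - s, by simp only [mem_Ici] at hu ⊢; linarith, ?_⟩
    show ψ (ψ x s) (u - s) = ψ x u
    rw [hψ.addE]
    congr 1
    ring

lemma omega_shift {ψ : E → ℝ → E} (hψ : IsFlow ψ) (x : E) (s : ℝ) :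
    omegaLimitSet ψ (ψ x s) = omegaLimitSet ψ x := by
  ext p
  simp only [mem_omega]
  constructor
  · intro h t ht
    have h1 : (0:ℝ) < max (t - s) 1 := lt_max_of_lt_right one_pos
    have := h _ h1
    rw [image_Ici_shift hψ] at this
    refine mem_of_mem_of_subset this (closure_mono (image_mono ?_))
    apply Ici_subset_Ici.mpr
    have := le_max_left (t - s) 1
    linarith
  · intro h t ht
    rw [image_Ici_shift hψ]
    have h1 : (0:ℝ) < max (s + t) 1 := lt_max_of_lt_right one_pos
    have := h _ h1
    refine mem_of_mem_of_subset this (closure_mono (image_mono ?_))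
    exact Ici_subset_Ici.mpr (le_max_left _ _)

lemma flowInvariant_closure {ψ : E → ℝ → E} (hψ : IsFlow ψ) {S : Set E}
    (hS : FlowInvariant ψ S) : FlowInvariant ψ (closure S) := by
  intro t
  apply subset_antisymm
  · have h1 := image_closure_subset_closure_image (s := S) (hψ.cont_x t)
    rw [hS t] at h1
    exact h1
  · intro x hx
    refine ⟨ψ x (-t), ?_, ?_⟩
    swap
    · show ψ (ψ x (-t)) t = x
      rw [hψ.addE, neg_add_cancel, hψ.zeroE]
    have h2 := image_closure_subset_closure_image (s := S) (hψ.cont_x (-t))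
    rw [hS (-t)] at h2
    exact h2 ⟨x, hx, rfl⟩

end Stmt13Aux
namespace Stmt13Aux

variable {E : Type*} [NormedAddCommGroup E]

lemma omega_subset_D {ψ : E → ℝ → E} (x : E) :
    omegaLimitSet ψ x ⊆ closure (⋃ y, omegaLimitSet ψ y) :=
  (subset_iUnion _ x).trans subset_closure

/-- No point can have its entire forward orbit (after time 0) of norm `≥ R`. -/
lemma no_forward_outside {ψ : E → ℝ → E} (hd : Dissipative ψ) {R : ℝ}
    (hR : closure (⋃ y, omegaLimitSet ψ y) ⊆ ball 0 R)
    {y : E} (h : ∀ t : ℝ, 0 < t → R ≤ ‖ψ y t‖) : False := by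
  obtain ⟨p, hp⟩ := hd.1 y
  have hp1 : p ∈ closure (ψ y '' Ici 1) := omega_subset y one_pos hp
  have hnorm : R ≤ ‖p‖ := by
    have hsub : closure (ψ y '' Ici 1) ⊆ {z : E | R ≤ ‖z‖} := by
      apply closure_minimal
      · rintro _ ⟨r, hr, rfl⟩
        exact h r (lt_of_lt_of_le one_pos hr)
      · exact isClosed_le continuous_const continuous_norm
    exact hsub hp1
  have hball : p ∈ ball (0:E) R := hR (omega_subset_D y hp)
  rw [mem_ball, dist_zero_right] at hball
  linarith

/-- If the backward orbit frequently meets a closed ball, the negative limit set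
meets that ball. -/
lemma negOmega_nonempty_of_frequently [ProperSpace E] {ψ : E → ℝ → E} {x : E} {M : ℝ}
    (h : ∀ T : ℝ, T < 0 → ∃ t ≤ T, ψ x t ∈ closedBall (0:E) M) :
    ∃ p ∈ negOmegaLimitSet ψ x, p ∈ closedBall (0:E) M := by
  set Z : {t : ℝ // t < 0} → Set E :=
    fun t => closure (ψ x '' Iic t.1) ∩ closedBall 0 M with hZ
  have hne : ∀ t, (Z t).Nonempty := by
    rintro ⟨t, ht⟩
    obtain ⟨s, hs, hmem⟩ := h t ht
    exact ⟨ψ x s, subset_closure ⟨s, hs, rfl⟩, hmem⟩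
  have hcomp : ∀ t, IsCompact (Z t) :=
    fun t => (isCompact_closedBall 0 M).inter_left isClosed_closure
  have hdir : Directed (· ⊇ ·) Z := by
    rintro a b
    refine ⟨⟨min a.1 b.1, min_lt_of_left_lt a.2⟩, ?_, ?_⟩ <;>
    · apply inter_subset_inter_left
      apply closure_mono
      apply image_mono
      apply Iic_subset_Iic.mpr
      simp [min_le_left, min_le_right]
  have : Nonempty {t : ℝ // t < 0} := ⟨⟨-1, by norm_num⟩⟩
  obtain ⟨p, hp⟩ := IsCompact.nonempty_iInter_of_directed_nonempty_isCompact_isClosed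
    Z hdir hne hcomp (fun t => isClosed_closure.inter Metric.isClosed_closedBall)
  rw [mem_iInter] at hp
  refine ⟨p, ?_, (hp ⟨-1, by norm_num⟩).2⟩
  rw [mem_negOmega]
  intro t ht
  exact (hp ⟨t, ht⟩).1

end Stmt13Aux
namespace Stmt13Aux

variable {E : Type*} [NormedAddCommGroup E]

lemma last_exit {ψ : E → ℝ → E} (hψ : IsFlow ψ) {B : Set E} (hB : IsClosed B) {x : E}
    (hx : ∃ t ≤ (0:ℝ), ψ x t ∈ B) :
    ∃ τ ≤ (0:ℝ), ψ x τ ∈ B ∧ ∀ u, τ < u → u ≤ 0 → ψ x u ∉ B := by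
  set T : Set ℝ := Iic 0 ∩ (fun t => ψ x t) ⁻¹' B with hT
  have hTne : T.Nonempty := by
    obtain ⟨t, ht, hmem⟩ := hx
    exact ⟨t, ht, hmem⟩
  have hbdd : BddAbove T := ⟨0, fun t ht => ht.1⟩
  have hTc : IsClosed T := isClosed_Iic.inter (hB.preimage (hψ.cont_t x))
  have hmem := hTc.csSup_mem hTne hbdd
  exact ⟨sSup T, hmem.1, hmem.2,
    fun u h1 h2 hu => absurd (le_csSup hbdd ⟨h2, hu⟩) (not_le.mpr h1)⟩

lemma backOrbit_bounded [ProperSpace E] {ψ : E → ℝ → E} (hψ : IsFlow ψ)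
    (hd : Dissipative ψ) {R R' : ℝ}
    (hR : closure (⋃ y, omegaLimitSet ψ y) ⊆ ball 0 R)
    (hRR' : R ≤ R') (hR' : 0 < R') :
    IsBounded {x : E | ∃ t ≤ (0:ℝ), ψ x t ∈ closedBall (0:E) R'} := by
  by_contra hub
  rw [isBounded_iff_subset_closedBall (0:E)] at hub
  push_neg at hub
  have hpick : ∀ k : ℕ, ∃ x : E,
      (∃ t ≤ (0:ℝ), ψ x t ∈ closedBall (0:E) R') ∧ (R' + k) < ‖x‖ := by
    intro k
    obtain ⟨x, hx, hnot⟩ := not_subset.mp (hub (R' + k))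
    refine ⟨x, hx, ?_⟩
    simpa [mem_closedBall, dist_zero_right, not_le] using hnot
  choose x hxW hxnorm using hpick
  have hle : ∀ k, ∃ τ ≤ (0:ℝ), ψ (x k) τ ∈ closedBall (0:E) R' ∧
      ∀ u, τ < u → u ≤ 0 → ψ (x k) u ∉ closedBall (0:E) R' :=
    fun k => last_exit hψ Metric.isClosed_closedBall (hxW k)
  choose τ hτ0 hτmem hτlast using hle
  set y : ℕ → E := fun k => ψ (x k) (τ k) with hy
  have hximg : ∀ k, ψ (y k) (-τ k) = x k := by
    intro k
    rw [hψ.addE, add_neg_cancel, hψ.zeroE]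
  have hout : ∀ k, ∀ u : ℝ, 0 < u → u ≤ -τ k → R' < ‖ψ (y k) u‖ := by
    intro k u hu1 hu2
    have heq : ψ (y k) u = ψ (x k) (τ k + u) := hψ.addE _ _ _
    rw [heq]
    have hnot := hτlast k (τ k + u) (by linarith) (by linarith)
    simpa [mem_closedBall, dist_zero_right, not_le] using hnot
  obtain ⟨y₀, hy₀mem, σ, hσmono, hσtend⟩ :=
    (isCompact_closedBall (0:E) R').tendsto_subseq hτmem
  refine no_forward_outside hd hR (y := y₀) ?_
  intro u hu
  have hKc : IsCompact ((fun p : E × ℝ => ψ p.1 p.2) '' (closedBall (0:E) R' ×ˢ Icc 0 u)) :=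
    ((isCompact_closedBall _ _).prod isCompact_Icc).image hψ.contE
  obtain ⟨M, hM⟩ := (isBounded_iff_subset_closedBall (0:E)).mp hKc.isBounded
  have hev : ∀ᶠ j in atTop, u ≤ -τ (σ j) := by
    by_contra hno
    rw [Filter.not_eventually] at hno
    obtain ⟨j, hj1, hj2⟩ := (frequently_atTop.mp hno) ⌈max M R' + 1⌉₊
    have hjge : max M R' + 1 ≤ (j : ℝ) := le_trans (Nat.le_ceil _) (by exact_mod_cast hj1)
    rw [not_le] at hj2
    have hmem2 : x (σ j) ∈ (fun p : E × ℝ => ψ p.1 p.2) '' (closedBall (0:E) R' ×ˢ Icc 0 u) := by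
      refine ⟨(y (σ j), -τ (σ j)), ⟨hτmem (σ j), ?_, hj2.le⟩, hximg (σ j)⟩
      show (0:ℝ) ≤ -τ (σ j)
      linarith [hτ0 (σ j)]
    have hxM : ‖x (σ j)‖ ≤ M := by
      simpa [mem_closedBall, dist_zero_right] using hM hmem2
    have h1 : (R' + (σ j : ℕ)) < ‖x (σ j)‖ := hxnorm (σ j)
    have h2 : (j : ℝ) ≤ (σ j : ℕ) := by exact_mod_cast hσmono.le_apply
    have h3 : M ≤ max M R' := le_max_left M R'
    linarith
  have hev2 : ∀ᶠ j in atTop, R' ≤ ‖ψ (y (σ j)) u‖ :=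
    hev.mono fun j hj => le_of_lt (hout (σ j) u hu hj)
  have h4 : Tendsto (fun j => ψ (y (σ j)) u) atTop (𝓝 (ψ y₀ u)) :=
    ((hψ.cont_x u).tendsto y₀).comp hσtend
  exact le_trans hRR' (ge_of_tendsto h4.norm hev2)

lemma exists_back_time [ProperSpace E] {ψ : E → ℝ → E} (hψ : IsFlow ψ)
    (hd : Dissipative ψ) {R : ℝ}
    (hR : closure (⋃ y, omegaLimitSet ψ y) ⊆ ball 0 R) {x : E}
    (hx : ¬ Tendsto (fun t => ‖ψ x t‖) atBot atTop) :
    ∃ t ≤ (0:ℝ), ψ x t ∈ closedBall (0:E) (R + 1) := by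
  rw [Filter.tendsto_atTop] at hx
  push_neg at hx
  obtain ⟨b, hb⟩ := hx
  have hfreq : ∀ T : ℝ, T < 0 → ∃ t ≤ T, ψ x t ∈ closedBall (0:E) (max b 0) := by
    intro T _
    obtain ⟨t, ht, hlt⟩ := (frequently_atBot.mp hb) T
    refine ⟨t, ht, ?_⟩
    rw [mem_closedBall, dist_zero_right]
    exact le_trans (le_of_lt hlt) (le_max_left _ _)
  obtain ⟨p, hpneg, _⟩ := negOmega_nonempty_of_frequently hfreq
  have hsub : omegaLimitSet ψ p ⊆ negOmegaLimitSet ψ x := by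
    have h1 : ψ p '' Ici 1 ⊆ negOmegaLimitSet ψ x := by
      rintro _ ⟨r, _, rfl⟩
      exact negOmega_orbit hψ hpneg r
    exact (omega_subset p one_pos).trans (closure_minimal h1 (negOmega_isClosed x))
  obtain ⟨q, hq⟩ := hd.1 p
  have hqD : q ∈ ball (0:E) R := hR (omega_subset_D p hq)
  rw [mem_ball, dist_zero_right] at hqD
  have hqneg : q ∈ negOmegaLimitSet ψ x := hsub hq
  have hcl := negOmega_subset x (t := -1) (by norm_num) hqneg
  rw [Metric.mem_closure_iff] at hcl
  obtain ⟨z, hzmem, hdist⟩ := hcl 1 one_pos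
  obtain ⟨r, hr, rfl⟩ := hzmem
  refine ⟨r, le_trans hr (by norm_num), ?_⟩
  rw [mem_closedBall, dist_zero_right]
  have htri : dist (ψ x r) (0:E) ≤ dist (ψ x r) q + dist q (0:E) := dist_triangle _ _ _
  rw [dist_zero_right] at htri
  rw [dist_comm] at hdist
  rw [dist_zero_right] at htri
  linarith

lemma esc_orbit {ψ : E → ℝ → E} (hψ : IsFlow ψ) {x : E}
    (hx : Tendsto (fun t => ‖ψ x t‖) atBot atTop) (s : ℝ) :
    Tendsto (fun t => ‖ψ (ψ x s) t‖) atBot atTop := by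
  have h1 : Tendsto (fun t : ℝ => s + t) atBot atBot :=
    tendsto_atBot_add_const_left atBot s tendsto_id
  have h2 : (fun t => ‖ψ (ψ x s) t‖) = (fun t => ‖ψ x t‖) ∘ (fun t : ℝ => s + t) := by
    funext t
    simp [Function.comp, hψ.addE]
  rw [h2]
  exact hx.comp h1

lemma nesc_orbit {ψ : E → ℝ → E} (hψ : IsFlow ψ) {x : E}
    (hx : ¬ Tendsto (fun t => ‖ψ x t‖) atBot atTop) (s : ℝ) :
    ¬ Tendsto (fun t => ‖ψ (ψ x s) t‖) atBot atTop := by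
  intro hesc
  apply hx
  have := esc_orbit hψ hesc (-s)
  rwa [hψ.addE, add_neg_cancel, hψ.zeroE] at this

lemma nesc_closed {ψ : E → ℝ → E} (hψ : IsFlow ψ)
    (hb : IsBounded {x : E | ¬ Tendsto (fun t => ‖ψ x t‖) atBot atTop}) :
    IsClosed {x : E | ¬ Tendsto (fun t => ‖ψ x t‖) atBot atTop} := by
  set N := {x : E | ¬ Tendsto (fun t => ‖ψ x t‖) atBot atTop} with hN
  have hNinv : FlowInvariant ψ N := flowInvariant_of_mapsTo hψ fun z hz t => nesc_orbit hψ hz t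
  obtain ⟨R₃, hR₃⟩ := (isBounded_iff_subset_closedBall (0:E)).mp hb
  apply isClosed_of_closure_subset
  intro x hx
  have horb : ∀ t : ℝ, ψ x t ∈ closure N :=
    fun t => FlowInvariant.memE (flowInvariant_closure hψ hNinv) hx t
  have hbound : ∀ t : ℝ, ‖ψ x t‖ ≤ R₃ := by
    intro t
    have := closure_minimal hR₃ Metric.isClosed_closedBall (horb t)
    simpa [mem_closedBall, dist_zero_right] using this
  intro htend
  rw [Filter.tendsto_atTop] at htend
  obtain ⟨T, hT⟩ := eventually_atBot.mp (htend (R₃ + 1))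
  have := hT T le_rfl
  linarith [hbound T]

end Stmt13Aux
namespace Stmt13Aux

variable {E : Type*} [NormedAddCommGroup E]

lemma B1_attraction {ψ : E → ℝ → E} (hψ : IsFlow ψ) (hd : Dissipative ψ)
    {K B1 : Set E} {T : ℝ} (hT : 0 < T)
    (hiso : IsIsolatingNbhd ψ B1 K)
    (habs : ∀ z ∈ B1, ∀ t : ℝ, T ≤ t → ψ z t ∈ interior B1) :
    (∀ z ∈ B1, omegaLimitSet ψ z ⊆ K) ∧ B1 ⊆ attractionRegion ψ K ∧
      IsOpen (attractionRegion ψ K) := by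
  obtain ⟨hB1c, hKint, hKinv, hmax⟩ := hiso
  have hkey : ∀ z ∈ B1, omegaLimitSet ψ z ⊆ K := by
    intro z hz
    apply hmax
    · exact omega_flowInvariant hψ z
    · refine (omega_subset z hT).trans (closure_minimal ?_ hB1c.isClosed)
      rintro _ ⟨r, hr, rfl⟩
      exact interior_subset (habs z hz r hr)
  refine ⟨hkey, fun z hz => ⟨hd.1 z, hkey z hz⟩, ?_⟩
  rw [isOpen_iff_forall_mem_open]
  intro x hx
  obtain ⟨hne, hsubK⟩ := hx
  obtain ⟨p, hp⟩ := hne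
  have hpint : p ∈ interior B1 := hKint (hsubK hp)
  have hp1 : p ∈ closure (ψ x '' Ici 1) := omega_subset x one_pos hp
  rw [_root_.mem_closure_iff] at hp1
  obtain ⟨z, hzo, s, hs, rfl⟩ := hp1 _ isOpen_interior hpint
  refine ⟨(fun y => ψ y s) ⁻¹' (interior B1), ?_, isOpen_interior.preimage (hψ.cont_x s), hzo⟩
  intro w hw
  simp only [mem_preimage] at hw
  have h1 : omegaLimitSet ψ (ψ w s) ⊆ K := hkey _ (interior_subset hw)
  rw [omega_shift hψ] at h1
  exact ⟨hd.1 w, h1⟩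

lemma compactInvariant_subset_C {ψ : E → ℝ → E} (hψ : IsFlow ψ) (hd : Dissipative ψ)
    {K S : Set E} (hSc : IsCompact S) (hSi : FlowInvariant ψ S) (hSK : S ⊆ Kᶜ) :
    S ⊆ (attractionRegion ψ K ∪ {x : E | Tendsto (fun t => ‖ψ x t‖) atBot atTop})ᶜ := by
  intro y hyS
  simp only [mem_compl_iff, mem_union, not_or]
  have horb : ∀ t : ℝ, ψ y t ∈ S := fun t => FlowInvariant.memE hSi hyS t
  constructor
  · intro hyA
    have hωS : omegaLimitSet ψ y ⊆ S := by
      refine (omega_subset y one_pos).trans (closure_minimal ?_ hSc.isClosed)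
      rintro _ ⟨r, _, rfl⟩
      exact horb r
    obtain ⟨p, hp⟩ := hd.1 y
    exact hSK (hωS hp) (hyA.2 hp)
  · intro hesc
    obtain ⟨M, hM⟩ := (isBounded_iff_subset_closedBall (0:E)).mp hSc.isBounded
    rw [mem_setOf_eq, Filter.tendsto_atTop] at hesc
    obtain ⟨T', hT'⟩ := eventually_atBot.mp (hesc (M + 1))
    have h1 := hT' T' le_rfl
    have h2 := hM (horb T')
    rw [mem_closedBall, dist_zero_right] at h2
    linarith

lemma absorb_of_step {ψ : E → ℝ → E} (hψ : IsFlow ψ) {B1 : Set E} {T : ℝ} (hT : 0 < T)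
    (h : ∀ z ∈ B1, ∀ t : ℝ, t ∈ Icc T (2*T) → ψ z t ∈ interior B1) :
    ∀ z ∈ B1, ∀ t : ℝ, T ≤ t → ψ z t ∈ interior B1 := by
  have hk : ∀ z ∈ B1, ∀ k : ℕ, ψ z (k * T) ∈ B1 := by
    intro z hz k
    induction k with
    | zero => simpa [hψ.zeroE] using hz
    | succ k ih =>
      have heq : ψ z ((k + 1 : ℕ) * T) = ψ (ψ z (k * T)) T := by
        rw [hψ.addE]
        congr 1
        push_cast
        ring
      rw [heq]
      exact interior_subset (h _ ih T ⟨le_refl T, by linarith⟩)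
  intro z hz t ht
  set k := ⌊(t - T) / T⌋₊ with hk'
  have hnn : 0 ≤ (t - T) / T := div_nonneg (by linarith) hT.le
  have h1 : ((k : ℝ)) * T ≤ t - T := (le_div_iff₀ hT).mp (Nat.floor_le hnn)
  have h2 : t - T < ((k : ℝ) + 1) * T := (div_lt_iff₀ hT).mp (Nat.lt_floor_add_one _)
  have hexp : ((k : ℝ) + 1) * T = (k : ℝ) * T + T := by ring
  have heq : ψ z t = ψ (ψ z ((k : ℝ) * T)) (t - (k : ℝ) * T) := by
    rw [hψ.addE]
    congr 1
    ring
  rw [heq]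
  exact h _ (hk z hz k) _ ⟨by linarith, by linarith⟩

end Stmt13Aux
namespace Stmt13Aux

variable {E : Type*} [NormedAddCommGroup E]

lemma main_single [ProperSpace E] {ψ : E → ℝ → E} (hψ : IsFlow ψ) (hd : Dissipative ψ)
    {K B1 : Set E} {T : ℝ} (hT : 0 < T) (hKc : IsCompact K)
    (hiso : IsIsolatingNbhd ψ B1 K)
    (habs : ∀ z ∈ B1, ∀ t : ℝ, T ≤ t → ψ z t ∈ interior B1)
    (hpol : ∃ S : Set E, S.Nonempty ∧ IsCompact S ∧ FlowInvariant ψ S ∧ S ⊆ Kᶜ) :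
    ∃ C : Set E, IsCompact C ∧ FlowInvariant ψ C ∧ C ⊆ Kᶜ ∧
      (∀ S : Set E, IsCompact S → FlowInvariant ψ S → S ⊆ Kᶜ → S ⊆ C) ∧
      C.Nonempty ∧ IsIsolatedInvariant ψ C := by
  set A := attractionRegion ψ K with hA
  set Esc := {x : E | Tendsto (fun t => ‖ψ x t‖) atBot atTop} with hEsc
  set C := (A ∪ Esc)ᶜ with hC
  obtain ⟨hkey, hB1A, hAopen⟩ := B1_attraction hψ hd hT hiso habs
  obtain ⟨r, hr⟩ := (isBounded_iff_subset_closedBall (0:E)).mp hd.2.isBounded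
  set R := max r 0 + 1 with hRdef
  have hRpos : 0 < R := by positivity
  have hR : closure (⋃ y, omegaLimitSet ψ y) ⊆ ball 0 R := by
    refine hr.trans ((closedBall_subset_closedBall (le_max_left r 0)).trans
      (closedBall_subset_ball ?_))
    linarith
  have hmaxC : ∀ S : Set E, IsCompact S → FlowInvariant ψ S → S ⊆ Kᶜ → S ⊆ C :=
    fun S h1 h2 h3 => compactInvariant_subset_C hψ hd h1 h2 h3
  obtain ⟨S0, hS0ne, hS0c, hS0i, hS0K⟩ := hpol
  have hCne : C.Nonempty := hS0ne.mono (hmaxC S0 hS0c hS0i hS0K)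
  have hnesc_b : IsBounded {x : E | ¬ Tendsto (fun t => ‖ψ x t‖) atBot atTop} := by
    apply (backOrbit_bounded hψ hd hR (R' := R + 1) (by linarith) (by linarith)).subset
    intro x hx
    exact exists_back_time hψ hd hR hx
  have hnesc_c := nesc_closed hψ hnesc_b
  have hCsub : C ⊆ {x : E | ¬ Tendsto (fun t => ‖ψ x t‖) atBot atTop} := by
    intro x hx
    simp only [hC, mem_compl_iff, mem_union, not_or] at hx
    exact hx.2
  have hCc : IsClosed C := by
    rw [hC, compl_union]
    refine (hAopen.isClosed_compl).inter ?_
    exact hnesc_c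
  have hCb : IsBounded C := hnesc_b.subset hCsub
  have hCcomp : IsCompact C := isCompact_of_isClosed_isBounded hCc hCb
  have hCorb : ∀ x ∈ C, ∀ t : ℝ, ψ x t ∈ C := by
    intro x hx t
    simp only [hC, mem_compl_iff, mem_union, not_or] at hx ⊢
    refine ⟨?_, nesc_orbit hψ hx.2 t⟩
    intro hA'
    apply hx.1
    refine ⟨hd.1 x, ?_⟩
    have h5 := hA'.2
    rwa [omega_shift hψ] at h5
  have hCinv : FlowInvariant ψ C := flowInvariant_of_mapsTo hψ hCorb
  have hCK : C ⊆ Kᶜ := by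
    intro x hx hxK
    exact hx (mem_union_left _ (hB1A (interior_subset (hiso.2.1 hxK))))
  obtain ⟨N', hN'c, hCN'int, hN'K⟩ :=
    exists_compact_between hCcomp hKc.isClosed.isOpen_compl hCK
  refine ⟨C, hCcomp, hCinv, hCK, hmaxC, hCne, hCcomp, hCinv, N', hN'c, hCN'int, hCinv, ?_⟩
  intro S hSi hSN'
  have hclS : closure S ⊆ N' := closure_minimal hSN' hN'c.isClosed
  exact subset_closure.trans (hmaxC _ (hN'c.of_isClosed_subset isClosed_closure hclS)
    (flowInvariant_closure hψ hSi) (hclS.trans hN'K))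

end Stmt13Aux
namespace Stmt13Aux

variable {E : Type*} [NormedAddCommGroup E]

lemma polar_invariant_set [ProperSpace E] {ψ : E → ℝ → E} (hψ : IsFlow ψ)
    {x : E} (hb : IsBounded (range (ψ x))) {tl L : ℝ} (htl : tl < 0)
    (hL : ∀ t : ℝ, t < tl → L < ‖ψ x t‖) :
    ∃ S : Set E, S.Nonempty ∧ IsCompact S ∧ FlowInvariant ψ S ∧
      ∀ y ∈ S, L ≤ ‖y‖ := by
  obtain ⟨M, hM⟩ := (isBounded_iff_subset_closedBall (0:E)).mp hb
  have hfreq : ∀ T : ℝ, T < 0 → ∃ t ≤ T, ψ x t ∈ closedBall (0:E) M :=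
    fun T _ => ⟨T, le_rfl, hM (mem_range_self T)⟩
  obtain ⟨p, hp, _⟩ := negOmega_nonempty_of_frequently hfreq
  refine ⟨negOmegaLimitSet ψ x, ⟨p, hp⟩, ?_, negOmega_flowInvariant hψ x, ?_⟩
  · refine (isCompact_closedBall (0:E) M).of_isClosed_subset (negOmega_isClosed x) ?_
    refine (negOmega_subset x (t := -1) (by norm_num)).trans
      (closure_minimal ?_ Metric.isClosed_closedBall)
    rintro _ ⟨r, _, rfl⟩
    exact hM (mem_range_self r)
  · intro y hy
    have h1 := negOmega_subset x (t := tl - 1) (by linarith) hy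
    have h2 : closure (ψ x '' Iic (tl - 1)) ⊆ {z : E | L ≤ ‖z‖} := by
      apply closure_minimal
      · rintro _ ⟨r, hr, rfl⟩
        refine le_of_lt (hL r ?_)
        simp only [mem_Iic] at hr
        linarith
      · exact isClosed_le continuous_const continuous_norm
    exact h2 h1

end Stmt13Aux

open Stmt13Aux
/-- For a polar family of dissipative flows on `ℝⁿ` and a continuation
`(K_λ)` of the global attractor `K₀` of `φ₀`, for all small `λ > 0` the maximal compact
invariant set `C_λ` of `φ_λ` contained in `ℝⁿ ∖ K_λ` exists, is nonempty and is an
isolated invariant set. -/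
theorem polar_maximal_invariant_nonempty_isolated {n : ℕ}
    (φ : ℝ → EuclideanSpace ℝ (Fin n) → ℝ → EuclideanSpace ℝ (Fin n))
    (hφ : IsParamFlow φ)
    (hdiss : ∀ l ∈ Icc (0 : ℝ) 1, Dissipative (φ l))
    (hpolar : PolarFamily φ)
    (lam1 : ℝ) (hlam1 : lam1 ∈ Ioc (0 : ℝ) 1)
    (K : ℝ → Set (EuclideanSpace ℝ (Fin n)))
    (hcont : IsContinuation φ (Icc 0 lam1) K)
    (hK0 : IsGlobalAttractor (φ 0) (K 0)) :
    ∃ lam0, 0 < lam0 ∧ lam0 ≤ lam1 ∧ ∀ l, 0 < l → l < lam0 →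
      ∃ C : Set (EuclideanSpace ℝ (Fin n)),
        IsCompact C ∧ FlowInvariant (φ l) C ∧ C ⊆ (K l)ᶜ ∧
        (∀ S : Set (EuclideanSpace ℝ (Fin n)),
          IsCompact S → FlowInvariant (φ l) S → S ⊆ (K l)ᶜ → S ⊆ C) ∧
        C.Nonempty ∧ IsIsolatedInvariant (φ l) C := by
  classical
  obtain ⟨hlam1pos, hlam1le⟩ := hlam1
  have h0I : (0:ℝ) ∈ Icc (0:ℝ) lam1 := ⟨le_rfl, hlam1pos.le⟩
  have h0I1 : (0:ℝ) ∈ Icc (0:ℝ) 1 := ⟨le_rfl, zero_le_one⟩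
  have hflow0 : IsFlow (φ 0) := hφ.2 0 h0I1
  obtain ⟨hK0comp, hK0inv, hK0stab, hK0attr⟩ := hK0
  obtain ⟨-, -, N0, hN0c, hN0int, -, hN0max⟩ := hcont.1 0 h0I
  obtain ⟨B1, hB1c, hB1int, hB1sub⟩ := exists_compact_between hK0comp isOpen_interior hN0int
  have hB1N0 : B1 ⊆ N0 := hB1sub.trans interior_subset
  have hB1iso0 : IsIsolatingNbhd (φ 0) B1 (K 0) :=
    ⟨hB1c, hB1int, hK0inv, fun S hS h => hN0max S hS (h.trans hB1N0)⟩
  obtain ⟨V, hVmem, hV⟩ := hK0stab (interior B1) ((isOpen_interior.mem_nhdsSet).mpr hB1int)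
  have hVint : K 0 ⊆ interior V := subset_interior_iff_mem_nhdsSet.mpr hVmem
  -- choose, for every point, a time at which the `φ 0`-orbit is inside `interior V`
  have hxs : ∀ x : EuclideanSpace ℝ (Fin n), ∃ s : ℝ, 1 ≤ s ∧ φ 0 x s ∈ interior V := by
    intro x
    have hx : x ∈ attractionRegion (φ 0) (K 0) := by rw [hK0attr]; trivial
    obtain ⟨⟨p, hp⟩, hsub⟩ := hx
    have hpV : p ∈ interior V := hVint (hsub hp)
    have hp1 := Stmt13Aux.omega_subset x one_pos hp
    rw [_root_.mem_closure_iff] at hp1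
    obtain ⟨z, hzo, r, hr, rfl⟩ := hp1 _ isOpen_interior hpV
    exact ⟨r, hr, hzo⟩
  choose s hs1 hsV using hxs
  obtain ⟨F, hF⟩ := hB1c.elim_finite_subcover
    (fun x : EuclideanSpace ℝ (Fin n) => (fun y => φ 0 y (s x)) ⁻¹' (interior V))
    (fun x => isOpen_interior.preimage (hflow0.cont_x (s x)))
    (fun x _ => mem_iUnion.mpr ⟨x, hsV x⟩)
  set T : ℝ := 1 + ∑ i ∈ F, max (s i) 0 with hTdef
  have hsum0 : 0 ≤ ∑ i ∈ F, max (s i) 0 := Finset.sum_nonneg fun i _ => le_max_right _ _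
  have hTpos : 0 < T := by rw [hTdef]; linarith
  have habs0 : ∀ z ∈ B1, ∀ t : ℝ, T ≤ t → φ 0 z t ∈ interior B1 := by
    intro z hz t ht
    obtain ⟨x, hxF, hxmem⟩ := mem_iUnion₂.mp (hF hz)
    simp only [mem_preimage] at hxmem
    have hs_le : s x ≤ T := by
      have h1 : max (s x) 0 ≤ ∑ i ∈ F, max (s i) 0 :=
        Finset.single_le_sum (fun i _ => le_max_right (s i) 0) hxF
      have h2 := le_max_left (s x) 0
      rw [hTdef]
      linarith
    have heq : φ 0 z t = φ 0 (φ 0 z (s x)) (t - s x) := by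
      rw [hflow0.addE]
      congr 1
      ring
    rw [heq]
    exact hV _ (interior_subset hxmem) (t - s x) (by linarith)
  -- uniform-in-`l` absorbing property on `[T, 2T]`
  obtain ⟨δ2, hδ2pos, hδ2⟩ : ∃ δ2 : ℝ, 0 < δ2 ∧ ∀ l z t, 0 ≤ l → l ≤ 1 → l < δ2 →
      z ∈ B1 → t ∈ Icc T (2*T) → φ l z t ∈ interior B1 := by
    by_contra hcon
    push_neg at hcon
    have hpick : ∀ k : ℕ, ∃ l z t, 0 ≤ l ∧ l ≤ 1 ∧ l < 1/((k:ℝ)+1) ∧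
        z ∈ B1 ∧ t ∈ Icc T (2*T) ∧ φ l z t ∉ interior B1 :=
      fun k => hcon (1/((k:ℝ)+1)) (by positivity)
    choose lk zk tk hl0 hl1 hlk hzk htk hnot using hpick
    obtain ⟨⟨z₀, t₀⟩, hzt₀, σ, hσ, hσtend⟩ :=
      (hB1c.prod isCompact_Icc).tendsto_subseq (x := fun k => (zk k, tk k))
        (fun k => ⟨hzk k, htk k⟩)
    have hltend : Tendsto (fun j => lk (σ j)) atTop (𝓝 0) := by
      refine squeeze_zero (fun j => hl0 (σ j)) (fun j => ?_)
        tendsto_one_div_add_atTop_nhds_zero_nat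
      have h1 : lk (σ j) < 1/((σ j : ℝ)+1) := hlk (σ j)
      have h2 : (1:ℝ)/((σ j : ℝ)+1) ≤ 1/((j:ℝ)+1) := by
        apply one_div_le_one_div_of_le (by positivity)
        have h3 : (j:ℝ) ≤ (σ j : ℝ) := by exact_mod_cast hσ.le_apply
        linarith
      linarith
    have hmemS : ∀ j, ((lk (σ j), (zk (σ j), tk (σ j))) :
        ℝ × (EuclideanSpace ℝ (Fin n)) × ℝ) ∈
        (Icc (0:ℝ) 1) ×ˢ (univ : Set ((EuclideanSpace ℝ (Fin n)) × ℝ)) :=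
      fun j => ⟨⟨hl0 _, hl1 _⟩, trivial⟩
    have hptS : ((0:ℝ), (z₀, t₀)) ∈
        (Icc (0:ℝ) 1) ×ˢ (univ : Set ((EuclideanSpace ℝ (Fin n)) × ℝ)) := ⟨h0I1, trivial⟩
    have htendpt : Tendsto (fun j => ((lk (σ j), (zk (σ j), tk (σ j))) :
        ℝ × (EuclideanSpace ℝ (Fin n)) × ℝ)) atTop (𝓝 (0, (z₀, t₀))) :=
      Tendsto.prodMk_nhds hltend hσtend
    have hcomp := (hφ.1 _ hptS).tendsto.comp
      (tendsto_nhdsWithin_iff.mpr ⟨htendpt, Filter.Eventually.of_forall hmemS⟩)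
    have hlim_mem : φ 0 z₀ t₀ ∈ interior B1 := habs0 z₀ hzt₀.1 t₀ hzt₀.2.1
    have hev := hcomp.eventually_mem (isOpen_interior.mem_nhds hlim_mem)
    obtain ⟨j, hj⟩ := hev.exists
    exact hnot (σ j) hj
  obtain ⟨δ, hδpos, hδ⟩ := hcont.2 0 h0I B1 hB1iso0
  obtain ⟨RB, hRB⟩ :=
    (isBounded_iff_subset_closedBall (0 : EuclideanSpace ℝ (Fin n))).mp hB1c.isBounded
  set L : ℝ := max (RB + 1) 1 with hLdef
  obtain ⟨lam', hlam'pos, hpol⟩ := hpolar L (lt_max_of_lt_right one_pos)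
  refine ⟨min δ (min δ2 (min lam' lam1)), by positivity, ?_, ?_⟩
  · exact le_trans (min_le_right _ _) (le_trans (min_le_right _ _) (min_le_right _ _))
  intro l hl0' hllt
  have hlδ : l < δ := lt_of_lt_of_le hllt (min_le_left _ _)
  have hlδ2 : l < δ2 := lt_of_lt_of_le hllt (le_trans (min_le_right _ _) (min_le_left _ _))
  have hllam' : l < lam' := lt_of_lt_of_le hllt
    (le_trans (min_le_right _ _) (le_trans (min_le_right _ _) (min_le_left _ _)))
  have hlI : l ∈ Icc (0:ℝ) lam1 := ⟨hl0'.le, le_of_lt (lt_of_lt_of_le hllt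
    (le_trans (min_le_right _ _) (le_trans (min_le_right _ _) (min_le_right _ _))))⟩
  have hl1' : l ≤ 1 := hlI.2.trans hlam1le
  have hlI1 : l ∈ Icc (0:ℝ) 1 := ⟨hl0'.le, hl1'⟩
  have hflowl : IsFlow (φ l) := hφ.2 l hlI1
  have hdl : Dissipative (φ l) := hdiss l hlI1
  have hisol : IsIsolatingNbhd (φ l) B1 (K l) :=
    hδ l hlI (by rw [sub_zero, abs_of_pos hl0']; exact hlδ)
  have habsl : ∀ z ∈ B1, ∀ t : ℝ, T ≤ t → φ l z t ∈ interior B1 :=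
    Stmt13Aux.absorb_of_step hflowl hTpos (fun z hz t ht => hδ2 l z t hl0'.le hl1' hlδ2 hz ht)
  have hKlc : IsCompact (K l) := (hcont.1 l hlI).1
  obtain ⟨x, hxb, tl, htl, hLx⟩ := hpol l hl0' hllam' hl1'
  obtain ⟨S0, hS0ne, hS0c, hS0i, hS0L⟩ := Stmt13Aux.polar_invariant_set hflowl hxb htl hLx
  have hS0K : S0 ⊆ (K l)ᶜ := by
    intro y hy hyK
    have h1 : ‖y‖ ≤ RB := by
      have := hRB (interior_subset (hisol.2.1 hyK))
      simpa [mem_closedBall, dist_zero_right] using this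
    have h2 : L ≤ ‖y‖ := hS0L y hy
    have h3 : RB + 1 ≤ L := le_max_left _ _
    linarith
  exact Stmt13Aux.main_single hflowl hdl hTpos hKlc hisol habsl ⟨S0, hS0ne, hS0c, hS0i, hS0K⟩
end

section
/- Let φ_λ : ℝⁿ × ℝ → ℝⁿ, λ ∈ [0,1], be a polar family of dissipative flows, K_0 the global attractor of φ_0, and (K_λ)_{λ∈[0,λ₁]} a continuation of K_0. For each λ let A_λ denote the global attractor of φ_λ. Then there exists λ₀ > 0 such that for 0 < λ < λ₀: K_λ ⊊ A_λ, K_λ is an attractor of φ_λ, the maximal compact invariant set C_λ of φ_λ contained in ℝⁿ ∖ K_λ satisfies ∅ ≠ C_λ ⊂ A_λ, and (K_λ, C_λ) is an attractor–repeller decomposition of A_λ, i.e. for every x ∈ A_λ with x ∉ K_λ ∪ C_λ one has ω_λ(x) ⊂ K_λ and ω*_λ(x) ⊂ C_λ. -/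
/-!
The closed `1`-thickening `P` of the global attractor `K₀` of `φ₀` isolates `K₀`, and `φ₀`
carries `P` uniformly into its interior after some time `T`. By joint continuity the same holds
for `φ_λ` on the compact time window `[T, 2T]` when `λ` is small, so `P` is a trapping region of
`φ_λ`, and by continuation it isolates `K_λ`. The ω-limit of a compact trapping region is
invariant and attracts it uniformly, so it lies in `K_λ`, which makes `K_λ` an attractor whose
basin is the open set of orbits entering the interior of `P`. The dual repeller
`C_λ = A_λ ∖ basin(K_λ)` is the maximal compact invariant set avoiding `K_λ`; a backward limit
point in the stable set `K_λ` would pull the point itself into `K_λ`, so `ω*_λ(x) ⊆ C_λ`.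
Finally, the backward limit set of a polar orbit reaching beyond `P` is a nonempty compact
invariant set avoiding `K_λ`, whence `C_λ ≠ ∅` and `K_λ ≠ A_λ`.
-/

open Set Metric Filter Topology Bornology

open omegaLimit

theorem omegaLimit_subset_of_eventually_mapsTo {τ α β : Type*} [TopologicalSpace β]
    {l : Filter τ} {ϕ : τ → α → β} {s : Set α} {c : Set β} (hc : IsClosed c)
    (h : ∀ᶠ t in l, MapsTo (ϕ t) s c) : ω l ϕ s ⊆ c :=
  (omegaLimit_subset_closure_image2 l ϕ s h).trans
    (closure_minimal (image2_subset_iff.2 fun _ ht _ hx => ht hx) hc)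

theorem nonempty_omegaLimit_of_eventually_mapsTo {τ α β : Type*} [TopologicalSpace β]
    [T2Space β] {l : Filter τ} [l.NeBot] {ϕ : τ → α → β} {s : Set α} {c : Set β}
    (hc : IsCompact c) (h : ∀ᶠ t in l, MapsTo (ϕ t) s c) (hs : s.Nonempty) :
    (ω l ϕ s).Nonempty :=
  nonempty_omegaLimit_of_isCompact_absorbing l ϕ s hc
    ⟨_, h, closure_minimal (image2_subset_iff.2 fun _ ht _ hx => ht hx) hc.isClosed⟩ hs

theorem FlowInvariant.apply_mem {M : Type*} {f : M → ℝ → M} {S : Set M}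
    (hS : FlowInvariant f S) {x : M} (hx : x ∈ S) (t : ℝ) : f x t ∈ S :=
  hS t ▸ mem_image_of_mem _ hx

section Flow

variable {M : Type*} [TopologicalSpace M] {f : M → ℝ → M}

theorem omegaLimitSet_eq_omegaLimit (x : M) : omegaLimitSet f x = ω⁺ (fun t y => f y t) {x} := by
  have hb : atTop.HasBasis (fun t : ℝ => 0 < t) Ici := (atTop_basis' 1).to_hasBasis
    (fun t ht => ⟨t, by linarith, subset_rfl⟩)
    (fun t _ => ⟨max t 1, le_max_right _ _, Ici_subset_Ici.2 (le_max_left _ _)⟩)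
  simp only [omegaLimit_def, image2_singleton_right]
  rw [hb.biInter_mem fun _ _ h => closure_mono (image_mono h)]
  rfl

theorem negOmegaLimitSet_eq_omegaLimit (x : M) :
    negOmegaLimitSet f x = ω⁻ (fun t y => f y t) {x} := by
  have hb : atBot.HasBasis (fun t : ℝ => t < 0) Iic := (atBot_basis' (-1)).to_hasBasis
    (fun t ht => ⟨t, by linarith, subset_rfl⟩)
    (fun t _ => ⟨min t (-1), min_le_right _ _, Iic_subset_Iic.2 (min_le_left _ _)⟩)
  simp only [omegaLimit_def, image2_singleton_right]
  rw [hb.biInter_mem fun _ _ h => closure_mono (image_mono h)]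
  rfl

namespace IsFlow

def toFlow (hf : IsFlow f) : Flow ℝ M where
  toFun t x := f x t
  cont' := hf.1.comp continuous_swap
  map_add' t₁ t₂ x := by rw [hf.2.2 x t₂ t₁, add_comm]
  map_zero' := hf.2.1

theorem continuous_apply (hf : IsFlow f) (t : ℝ) : Continuous fun x => f x t :=
  hf.toFlow.continuous_toFun t

theorem apply_zero (hf : IsFlow f) (x : M) : f x 0 = x := hf.2.1 x

theorem apply_apply (hf : IsFlow f) (x : M) (s t : ℝ) : f (f x s) t = f x (s + t) :=
  hf.2.2 x s t

theorem apply_apply_neg (hf : IsFlow f) (x : M) (s : ℝ) : f (f x s) (-s) = x := by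
  rw [hf.apply_apply, add_neg_cancel, hf.apply_zero]

theorem flowInvariant_iff (hf : IsFlow f) {S : Set M} :
    FlowInvariant f S ↔ IsInvariant (fun t x => f x t) S :=
  (hf.toFlow.isInvariant_iff_image_eq S).symm

theorem flowInvariant_closure (hf : IsFlow f) {S : Set M} (hS : FlowInvariant f S) :
    FlowInvariant f (closure S) :=
  hf.flowInvariant_iff.2 fun t => (hf.flowInvariant_iff.1 hS t).closure (hf.continuous_apply t)

theorem flowInvariant_omegaLimit (hf : IsFlow f) {l : Filter ℝ}
    (hl : ∀ t, Tendsto (t + ·) l l) (s : Set M) :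
    FlowInvariant f (ω l (fun t y => f y t) s) :=
  hf.flowInvariant_iff.2 (hf.toFlow.isInvariant_omegaLimit l s hl)

theorem flowInvariant_omegaLimitSet (hf : IsFlow f) (x : M) :
    FlowInvariant f (omegaLimitSet f x) :=
  omegaLimitSet_eq_omegaLimit x ▸
    hf.flowInvariant_omegaLimit (fun t => tendsto_atTop_add_const_left _ t tendsto_id) _

theorem flowInvariant_negOmegaLimitSet (hf : IsFlow f) (x : M) :
    FlowInvariant f (negOmegaLimitSet f x) :=
  negOmegaLimitSet_eq_omegaLimit x ▸
    hf.flowInvariant_omegaLimit (fun t => tendsto_atBot_add_const_left _ t tendsto_id) _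

theorem omegaLimitSet_apply (hf : IsFlow f) (x : M) (s : ℝ) :
    omegaLimitSet f (f x s) = omegaLimitSet f x := by
  have h := hf.toFlow.omegaLimit_image_eq atTop {x}
    (fun t => tendsto_atTop_add_const_right _ t tendsto_id) s
  rw [image_singleton] at h
  rw [omegaLimitSet_eq_omegaLimit, omegaLimitSet_eq_omegaLimit]
  exact h

end IsFlow

end Flow

section Attraction

variable {M : Type*} [TopologicalSpace M] {f : M → ℝ → M} {A K : Set M}

theorem IsFlow.eventually_forall_mem_of_isCompact (hf : IsFlow f) {O : Set M} (hO : IsOpen O)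
    {I : Set ℝ} (hI : IsCompact I) {x : M} (hx : ∀ t ∈ I, f x t ∈ O) :
    ∀ᶠ y in 𝓝 x, ∀ t ∈ I, f y t ∈ O :=
  hI.eventually_forall_of_forall_eventually fun t ht =>
    hf.1.continuousAt.preimage_mem_nhds (hO.mem_nhds (hx t ht))

theorem IsFlow.mapsTo_of_mapsTo_Icc (hf : IsFlow f) {P : Set M} {T : ℝ} (hT : 0 < T)
    (h : ∀ t ∈ Icc T (2 * T), MapsTo (fun x => f x t) P P) :
    ∀ t, T ≤ t → MapsTo (fun x => f x t) P P := by
  have hind : ∀ n : ℕ, ∀ t ∈ Icc T ((n + 2) * T), MapsTo (fun x => f x t) P P := by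
    intro n
    induction n with
    | zero => simpa using h
    | succ n ih =>
      rintro t ⟨hTt, htn⟩ x hx
      rcases le_total t (2 * T) with ht | ht
      · exact h t ⟨hTt, ht⟩ hx
      · have hxT : f x T ∈ P := h T ⟨le_rfl, by linarith⟩ hx
        have hstep := ih (t - T) ⟨by linarith, by push_cast at htn; linarith⟩ hxT
        simpa only [hf.apply_apply, add_sub_cancel] using hstep
  intro t hTt
  obtain ⟨n, hn⟩ := exists_nat_ge (t / T)
  exact hind n t ⟨hTt, by rw [div_le_iff₀ hT] at hn; nlinarith⟩

theorem FlowStable.eventually_mapsTo (hst : FlowStable f K) (hf : IsFlow f) {S : Set M}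
    (hS : IsCompact S) (hSK : S ⊆ attractionRegion f K) {U : Set M} (hU : U ∈ 𝓝ˢ K) :
    ∀ᶠ t in atTop, MapsTo (fun x => f x t) S U := by
  obtain ⟨V, hV, hVU⟩ := hst U hU
  refine hS.induction_on (p := fun s => ∀ᶠ t in atTop, MapsTo (fun x => f x t) s U)
    (.of_forall fun _ => mapsTo_empty _ _)
    (fun s s' hss' h => h.mono fun t ht => ht.mono_left hss')
    (fun s s' hs hs' => (hs.and hs').mono fun t ht => ht.1.union ht.2) fun z hz => ?_
  obtain ⟨⟨w, hw⟩, hωK⟩ := hSK hz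
  have hVw : interior V ∈ 𝓝 w := interior_mem_nhds.2 (mem_nhdsSet_iff_forall.1 hV w (hωK hw))
  rw [omegaLimitSet_eq_omegaLimit] at hw
  obtain ⟨t₀, ht₀⟩ :=
    ((mem_omegaLimit_singleton_iff_mapClusterPt _ _ _ _).1 hw |>.frequently hVw).exists
  refine ⟨(fun x => f x t₀) ⁻¹' interior V, mem_nhdsWithin_of_mem_nhds
    ((isOpen_interior.preimage (hf.continuous_apply t₀)).mem_nhds ht₀), ?_⟩
  filter_upwards [eventually_ge_atTop t₀] with t ht x hx
  simpa only [hf.apply_apply, add_sub_cancel] using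
    hVU _ (interior_subset hx) (t - t₀) (sub_nonneg.2 ht)

variable [T1Space M]

theorem IsGlobalAttractor.subset_of_flowInvariant (hA : IsGlobalAttractor f A) (hf : IsFlow f)
    {S : Set M} (hS : IsCompact S) (hSi : FlowInvariant f S) : S ⊆ A := by
  intro x hx
  by_contra hxA
  obtain ⟨t, ht⟩ := (hA.2.2.1.eventually_mapsTo hf hS (hA.2.2.2 ▸ subset_univ S)
    (isOpen_compl_singleton.mem_nhdsSet.2 (subset_compl_singleton_iff.2 hxA))).exists
  rw [← hSi t] at hx
  obtain ⟨y, hy, rfl⟩ := hx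
  exact ht hy rfl

theorem FlowStable.mem_of_mem_negOmegaLimitSet (hst : FlowStable f K) (hf : IsFlow f)
    {x y : M} (hy : y ∈ negOmegaLimitSet f x) (hyK : y ∈ K) : x ∈ K := by
  by_contra hxK
  obtain ⟨V, hV, hVx⟩ := hst {x}ᶜ
    (isOpen_compl_singleton.mem_nhdsSet.2 (subset_compl_singleton_iff.2 hxK))
  rw [negOmegaLimitSet_eq_omegaLimit] at hy
  obtain ⟨t, htV, ht⟩ := (((mem_omegaLimit_singleton_iff_mapClusterPt _ _ _ _).1 hy).frequently
    (mem_nhdsSet_iff_forall.1 hV y hyK)).and_eventually (eventually_le_atBot 0) |>.exists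
  exact hVx _ htV (-t) (neg_nonneg.2 ht) (hf.apply_apply_neg x t)

end Attraction

section TrappingRegion

variable {M : Type*} [TopologicalSpace M] [T2Space M] {f : M → ℝ → M} {P K : Set M}

namespace IsIsolatingNbhd

theorem isCompact_right (hPK : IsIsolatingNbhd f P K) (hf : IsFlow f) : IsCompact K := by
  have hKP : K ⊆ P := hPK.2.1.trans interior_subset
  have hclK : closure K ⊆ K := hPK.2.2.2 _ (hf.flowInvariant_closure hPK.2.2.1)
    (closure_minimal hKP hPK.1.isClosed)
  exact hPK.1.of_isClosed_subset (closure_subset_iff_isClosed.1 hclK) hKP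

theorem omegaLimitSet_subset (hPK : IsIsolatingNbhd f P K) (hf : IsFlow f)
    (htrap : ∀ᶠ t in atTop, MapsTo (fun x => f x t) P P) {x : M} (hx : x ∈ P) :
    omegaLimitSet f x ⊆ K :=
  hPK.2.2.2 _ (hf.flowInvariant_omegaLimitSet x) <| omegaLimitSet_eq_omegaLimit (f := f) x ▸
    omegaLimit_subset_of_eventually_mapsTo hPK.1.isClosed
      (htrap.mono fun _ ht => mapsTo_singleton.2 (ht hx))

theorem mem_attractionRegion_iff (hPK : IsIsolatingNbhd f P K) (hf : IsFlow f)
    (htrap : ∀ᶠ t in atTop, MapsTo (fun x => f x t) P P) {x : M} :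
    x ∈ attractionRegion f K ↔ ∃ t, f x t ∈ interior P := by
  constructor
  · rintro ⟨⟨y, hy⟩, hωK⟩
    have hyP : interior P ∈ 𝓝 y := isOpen_interior.mem_nhds (hPK.2.1 (hωK hy))
    rw [omegaLimitSet_eq_omegaLimit] at hy
    exact ((mem_omegaLimit_singleton_iff_mapClusterPt _ _ _ _).1 hy |>.frequently hyP).exists
  · rintro ⟨t, ht⟩
    have hxt : f x t ∈ P := interior_subset ht
    show (omegaLimitSet f x).Nonempty ∧ omegaLimitSet f x ⊆ K
    rw [← hf.omegaLimitSet_apply x t]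
    refine ⟨?_, hPK.omegaLimitSet_subset hf htrap hxt⟩
    rw [omegaLimitSet_eq_omegaLimit]
    exact nonempty_omegaLimit_of_eventually_mapsTo hPK.1
      (htrap.mono fun _ hs => mapsTo_singleton.2 (hs hxt)) (singleton_nonempty _)

theorem isOpen_attractionRegion (hPK : IsIsolatingNbhd f P K) (hf : IsFlow f)
    (htrap : ∀ᶠ t in atTop, MapsTo (fun x => f x t) P P) : IsOpen (attractionRegion f K) := by
  have hreg : attractionRegion f K = ⋃ t, (fun x => f x t) ⁻¹' interior P := by
    ext x
    rw [hPK.mem_attractionRegion_iff hf htrap, mem_iUnion]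
    rfl
  rw [hreg]
  exact isOpen_iUnion fun t => isOpen_interior.preimage (hf.continuous_apply t)

theorem flowStable (hPK : IsIsolatingNbhd f P K) (hf : IsFlow f)
    (htrap : ∀ᶠ t in atTop, MapsTo (fun x => f x t) P P) : FlowStable f K := by
  intro U hU
  obtain ⟨O, hO, hKO, hOU⟩ := mem_nhdsSet_iff_exists.1 hU
  have hωP : ω⁺ (fun t y => f y t) P ⊆ K :=
    hPK.2.2.2 _
      (hf.flowInvariant_omegaLimit (fun t => tendsto_atTop_add_const_left _ t tendsto_id) P)
      (omegaLimit_subset_of_eventually_mapsTo hPK.1.isClosed htrap)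
  -- `P` is eventually carried into every open neighbourhood of its ω-limit
  obtain ⟨t₁, ht₁⟩ := eventually_atTop.1
    (eventually_mapsTo_of_isCompact_absorbing_of_isOpen_of_omegaLimit_subset atTop _ P hPK.1
      htrap hO (hωP.trans hKO))
  refine ⟨{x | x ∈ P ∧ ∀ t ∈ Icc 0 t₁, f x t ∈ O},
    mem_nhdsSet_iff_forall.2 fun x hx => ?_, ?_⟩
  · exact inter_mem (mem_interior_iff_mem_nhds.1 (hPK.2.1 hx))
      (hf.eventually_forall_mem_of_isCompact hO isCompact_Icc
        fun t _ => hKO (hPK.2.2.1.apply_mem hx t))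
  · rintro x ⟨hxP, hx⟩ t ht
    rcases le_total t t₁ with h | h
    · exact hOU (hx t ⟨ht, h⟩)
    · exact hOU (ht₁ t h hxP)

theorem isAttractor (hPK : IsIsolatingNbhd f P K) (hf : IsFlow f)
    (htrap : ∀ᶠ t in atTop, MapsTo (fun x => f x t) P P) : IsAttractor f K := by
  refine ⟨hPK.isCompact_right hf, hPK.2.2.1, hPK.flowStable hf htrap,
    (hPK.isOpen_attractionRegion hf htrap).mem_nhdsSet.2 fun x hx => ?_⟩
  exact (hPK.mem_attractionRegion_iff hf htrap).2 ⟨0, by rw [hf.apply_zero]; exact hPK.2.1 hx⟩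

end IsIsolatingNbhd

end TrappingRegion

section DualRepeller

variable {M : Type*} [TopologicalSpace M] {f : M → ℝ → M} {A K : Set M}

theorem IsFlow.flowInvariant_attractionRegion (hf : IsFlow f) (K : Set M) :
    FlowInvariant f (attractionRegion f K) :=
  hf.flowInvariant_iff.2 fun t x hx => by
    simpa only [attractionRegion, mem_ofPred_eq, hf.omegaLimitSet_apply] using hx

theorem IsFlow.flowInvariant_sdiff (hf : IsFlow f) {S R : Set M} (hS : FlowInvariant f S)
    (hR : FlowInvariant f R) : FlowInvariant f (S \ R) := fun t => by
  have hinj : Function.Injective fun x => f x t :=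
    Function.LeftInverse.injective (g := fun x => f x (-t)) fun x => hf.apply_apply_neg x t
  rw [image_sdiff hinj, hS t, hR t]

def dualRepeller (f : M → ℝ → M) (A K : Set M) : Set M :=
  A \ attractionRegion f K

theorem dualRepeller_subset_compl (hK : IsAttractor f K) : dualRepeller f A K ⊆ Kᶜ :=
  fun _ hx hxK => hx.2 (subset_of_mem_nhdsSet hK.2.2.2 hxK)

variable [T2Space M]

theorem subset_dualRepeller (hf : IsFlow f) (hA : IsGlobalAttractor f A) {S : Set M}
    (hS : IsCompact S) (hSi : FlowInvariant f S) (hSK : S ⊆ Kᶜ) : S ⊆ dualRepeller f A K := by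
  intro x hx
  refine ⟨hA.subset_of_flowInvariant hf hS hSi hx,
    fun ⟨⟨w, hw⟩, hωK⟩ => hSK ?_ (hωK hw)⟩
  rw [omegaLimitSet_eq_omegaLimit] at hw
  exact omegaLimit_subset_of_eventually_mapsTo hS.isClosed
    (.of_forall fun t => mapsTo_singleton.2 (hSi.apply_mem hx t)) hw

theorem negOmegaLimitSet_subset_dualRepeller (hf : IsFlow f) (hA : IsGlobalAttractor f A)
    (hK : IsAttractor f K) {x : M} (hxA : x ∈ A) (hxK : x ∉ K) :
    negOmegaLimitSet f x ⊆ dualRepeller f A K := by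
  have hωA : negOmegaLimitSet f x ⊆ A := negOmegaLimitSet_eq_omegaLimit (f := f) x ▸
    omegaLimit_subset_of_eventually_mapsTo hA.1.isClosed
      (.of_forall fun t => mapsTo_singleton.2 (hA.2.1.apply_mem hxA t))
  refine subset_dualRepeller hf hA
    (hA.1.of_isClosed_subset
      (negOmegaLimitSet_eq_omegaLimit (f := f) x ▸ isClosed_omegaLimit _ _ _) hωA)
    (hf.flowInvariant_negOmegaLimitSet x) fun y hy hyK => ?_
  exact hxK (hK.2.2.1.mem_of_mem_negOmegaLimitSet hf hy hyK)

theorem IsIsolatingNbhd.attractor_repeller_decomposition {P : Set M}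
    (hPK : IsIsolatingNbhd f P K) (hf : IsFlow f)
    (htrap : ∀ᶠ t in atTop, MapsTo (fun x => f x t) P P) (hA : IsGlobalAttractor f A)
    {S : Set M} (hS : IsCompact S) (hSi : FlowInvariant f S) (hSne : S.Nonempty)
    (hSK : S ⊆ Kᶜ) :
    K ⊂ A ∧ IsAttractor f K ∧
      ∃ C : Set M, IsCompact C ∧ FlowInvariant f C ∧ C ⊆ Kᶜ ∧
        (∀ S : Set M, IsCompact S → FlowInvariant f S → S ⊆ Kᶜ → S ⊆ C) ∧
        C.Nonempty ∧ C ⊆ A ∧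
        ∀ x ∈ A, x ∉ K ∪ C → omegaLimitSet f x ⊆ K ∧ negOmegaLimitSet f x ⊆ C := by
  have hK := hPK.isAttractor hf htrap
  have hSC := subset_dualRepeller hf hA hS hSi hSK
  obtain ⟨y, hy⟩ := hSne
  refine ⟨ssubset_of_subset_not_subset (hA.subset_of_flowInvariant hf hK.1 hK.2.1)
      fun hAK => hSK hy (hAK (hSC hy).1), hK, dualRepeller f A K,
    hA.1.diff (hPK.isOpen_attractionRegion hf htrap),
    hf.flowInvariant_sdiff hA.2.1 (hf.flowInvariant_attractionRegion K),
    dualRepeller_subset_compl hK, fun _ => subset_dualRepeller hf hA, ⟨y, hSC hy⟩,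
    sdiff_subset, fun x hxA hx => ?_⟩
  rw [mem_union, not_or] at hx
  have hxreg : x ∈ attractionRegion f K := by_contra fun h => hx.2 ⟨hxA, h⟩
  exact ⟨hxreg.2, negOmegaLimitSet_subset_dualRepeller hf hA hK hxA hx.1⟩

end DualRepeller

section Metric

variable {M : Type*} [MetricSpace M] [ProperSpace M] {f : M → ℝ → M}

theorem IsGlobalAttractor.isIsolatingNbhd_cthickening {A : Set M} (hA : IsGlobalAttractor f A)
    (hf : IsFlow f) {ε : ℝ} (hε : 0 < ε) : IsIsolatingNbhd f (cthickening ε A) A := by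
  refine ⟨hA.1.cthickening, (self_subset_thickening hε A).trans
    (thickening_subset_interior_cthickening ε A), hA.2.1, fun S hSi hSP => ?_⟩
  have hcl : IsCompact (closure S) :=
    hA.1.cthickening.of_isClosed_subset isClosed_closure (closure_minimal hSP isClosed_cthickening)
  exact subset_closure.trans (hA.subset_of_flowInvariant hf hcl (hf.flowInvariant_closure hSi))

theorem nonempty_negOmegaLimitSet_of_isBounded {x : M} (hb : IsBounded (range (f x))) :
    (negOmegaLimitSet f x).Nonempty :=
  negOmegaLimitSet_eq_omegaLimit (f := f) x ▸
    nonempty_omegaLimit_of_eventually_mapsTo hb.isCompact_closure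
    (.of_forall fun t => mapsTo_singleton.2 (subset_closure (mem_range_self t)))
    (singleton_nonempty x)

theorem isCompact_negOmegaLimitSet_of_isBounded {x : M} (hb : IsBounded (range (f x))) :
    IsCompact (negOmegaLimitSet f x) := by
  rw [negOmegaLimitSet_eq_omegaLimit]
  exact hb.isCompact_closure.of_isClosed_subset (isClosed_omegaLimit _ _ _)
    (omegaLimit_subset_of_eventually_mapsTo isClosed_closure
      (.of_forall fun t => mapsTo_singleton.2 (subset_closure (mem_range_self t))))

end Metric

section Family

theorem IsParamFlow.eventually_forall_mem {M : Type*} [TopologicalSpace M]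
    {φ : ℝ → M → ℝ → M} (hφ : IsParamFlow φ) {Q : Set (M × ℝ)} (hQ : IsCompact Q)
    {O : Set M} (hO : IsOpen O) (h0 : ∀ q ∈ Q, φ 0 q.1 q.2 ∈ O) :
    ∀ᶠ l in 𝓝[>] 0, ∀ q ∈ Q, φ l q.1 q.2 ∈ O := by
  have hnear : ∀ᶠ l in 𝓝 (0 : ℝ), ∀ q ∈ Q, l ∈ Icc (0 : ℝ) 1 → φ l q.1 q.2 ∈ O := by
    refine hQ.eventually_forall_of_forall_eventually fun q hq => ?_
    have hcont := hφ.1 (0, q) ⟨left_mem_Icc.2 zero_le_one, mem_univ _⟩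
    exact (mem_nhdsWithin_iff_eventually.1 (hcont.preimage_mem_nhdsWithin
      (hO.mem_nhds (h0 q hq)))).mono fun z hz hz1 => hz ⟨hz1, mem_univ _⟩
  filter_upwards [nhdsWithin_le_nhds hnear, Icc_mem_nhdsGT one_pos] with l hl hl1 q hq
  exact hl q hq hl1

theorem IsParamFlow.eventually_trapping {M : Type*} [TopologicalSpace M]
    {φ : ℝ → M → ℝ → M} (hφ : IsParamFlow φ) {K₀ P : Set M}
    (hK₀ : IsGlobalAttractor (φ 0) K₀) (hP : IsCompact P) (hK₀P : K₀ ⊆ interior P) :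
    ∀ᶠ l in 𝓝[>] 0, ∀ᶠ t in atTop, MapsTo (fun x => φ l x t) P P := by
  obtain ⟨T, hT⟩ := eventually_atTop.1 (hK₀.2.2.1.eventually_mapsTo
    (hφ.2 0 (left_mem_Icc.2 zero_le_one)) hP (hK₀.2.2.2 ▸ subset_univ P)
    (isOpen_interior.mem_nhdsSet.2 hK₀P))
  -- continuity in `l` only controls a compact window of times
  have hT' : ∀ q ∈ P ×ˢ Icc (max T 1) (2 * max T 1), φ 0 q.1 q.2 ∈ interior P :=
    fun q hq => hT q.2 ((le_max_left _ _).trans hq.2.1) hq.1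
  filter_upwards [hφ.eventually_forall_mem (hP.prod isCompact_Icc) isOpen_interior hT',
    Icc_mem_nhdsGT one_pos] with l hl hl1
  exact eventually_atTop.2 ⟨max T 1, (hφ.2 l hl1).mapsTo_of_mapsTo_Icc (by positivity)
    fun t ht x hx => interior_subset (hl (x, t) ⟨hx, ht⟩)⟩

theorem PolarFamily.eventually_exists_bounded_orbit {E : Type*} [NormedAddCommGroup E]
    {φ : ℝ → E → ℝ → E} (hpolar : PolarFamily φ) {L : ℝ} (hL : 0 < L) :
    ∀ᶠ l in 𝓝[>] 0, ∃ x, IsBounded (range (φ l x)) ∧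
      ∀ᶠ t in atBot, φ l x t ∈ (ball 0 L)ᶜ := by
  obtain ⟨lam0, hlam0, hx⟩ := hpolar L hL
  filter_upwards [Ioo_mem_nhdsGT (lt_min hlam0 one_pos)] with l ⟨hl0, hl⟩
  obtain ⟨x, hxb, tl, -, htl⟩ :=
    hx l hl0 (hl.trans_le (min_le_left _ _)) (hl.le.trans (min_le_right _ _))
  refine ⟨x, hxb, (eventually_lt_atBot tl).mono fun t ht => ?_⟩
  simpa using (htl t ht).le

end Family

theorem polar_attractor_repeller_decomposition_general {n : ℕ}
    (φ : ℝ → EuclideanSpace ℝ (Fin n) → ℝ → EuclideanSpace ℝ (Fin n))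
    (hφ : IsParamFlow φ)
    (hpolar : PolarFamily φ)
    (lam1 : ℝ) (hlam1 : lam1 ∈ Ioc (0 : ℝ) 1)
    (K : ℝ → Set (EuclideanSpace ℝ (Fin n)))
    (hcont : IsContinuation φ (Icc 0 lam1) K)
    (hK0 : IsGlobalAttractor (φ 0) (K 0))
    (A : ℝ → Set (EuclideanSpace ℝ (Fin n)))
    (hA : ∀ l ∈ Icc (0 : ℝ) 1, IsGlobalAttractor (φ l) (A l)) :
    ∃ lam0, 0 < lam0 ∧ lam0 ≤ lam1 ∧ ∀ l, 0 < l → l < lam0 →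
      K l ⊂ A l ∧ IsAttractor (φ l) (K l) ∧
      ∃ C : Set (EuclideanSpace ℝ (Fin n)),
        IsCompact C ∧ FlowInvariant (φ l) C ∧ C ⊆ (K l)ᶜ ∧
        (∀ S : Set (EuclideanSpace ℝ (Fin n)),
          IsCompact S → FlowInvariant (φ l) S → S ⊆ (K l)ᶜ → S ⊆ C) ∧
        C.Nonempty ∧ C ⊆ A l ∧
        ∀ x ∈ A l, x ∉ K l ∪ C →
          omegaLimitSet (φ l) x ⊆ K l ∧ negOmegaLimitSet (φ l) x ⊆ C := by
  set P := cthickening 1 (K 0)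
  have hP : IsIsolatingNbhd (φ 0) P (K 0) :=
    hK0.isIsolatingNbhd_cthickening (hφ.2 0 (left_mem_Icc.2 zero_le_one)) one_pos
  obtain ⟨L, hL, hPL⟩ := hP.1.isBounded.subset_ball_lt 0 0
  obtain ⟨δ, hδ, hcontP⟩ := hcont.2 0 (left_mem_Icc.2 hlam1.1.le) P hP
  obtain ⟨lam0, hlam0, hsmall⟩ := mem_nhdsGT_iff_exists_Ioo_subset.1
    (Eventually.and (Ioo_mem_nhdsGT (lt_min hδ hlam1.1))
      ((hφ.eventually_trapping hK0 hP.1 hP.2.1).and (hpolar.eventually_exists_bounded_orbit hL)))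
  refine ⟨min lam0 lam1, lt_min hlam0 hlam1.1, min_le_right _ _, fun l hl hl0 => ?_⟩
  obtain ⟨⟨-, hlδ⟩, htrap, x, hxb, hxfar⟩ :=
    hsmall ⟨hl, hl0.trans_le (min_le_left _ _)⟩
  have hl1 : l ∈ Icc (0 : ℝ) 1 := ⟨hl.le, hlδ.le.trans ((min_le_right _ _).trans hlam1.2)⟩
  have hPl : IsIsolatingNbhd (φ l) P (K l) :=
    hcontP l ⟨hl.le, hlδ.le.trans (min_le_right _ _)⟩
      (by rw [sub_zero, abs_of_pos hl]; exact hlδ.trans_le (min_le_left _ _))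
  have hfar : negOmegaLimitSet (φ l) x ⊆ (K l)ᶜ := calc
    negOmegaLimitSet (φ l) x ⊆ (ball 0 L)ᶜ := negOmegaLimitSet_eq_omegaLimit (f := φ l) x ▸
      omegaLimit_subset_of_eventually_mapsTo isOpen_ball.isClosed_compl
        (hxfar.mono fun _ ht => mapsTo_singleton.2 ht)
    _ ⊆ (K l)ᶜ := compl_subset_compl.2 ((hPl.2.1.trans interior_subset).trans hPL)
  exact hPl.attractor_repeller_decomposition (hφ.2 l hl1) htrap (hA l hl1)
    (isCompact_negOmegaLimitSet_of_isBounded hxb) ((hφ.2 l hl1).flowInvariant_negOmegaLimitSet x)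
    (nonempty_negOmegaLimitSet_of_isBounded hxb) hfar

/-- For a polar family of dissipative flows on `ℝⁿ`, a continuation
`(K_λ)` of the global attractor `K₀` of `φ₀` and the global attractors `A_λ` of `φ_λ`:
for all small `λ > 0`, `K_λ ⊊ A_λ`, `K_λ` is an attractor, the maximal compact
invariant set `C_λ ⊆ ℝⁿ ∖ K_λ` is nonempty and contained in `A_λ`, and `(K_λ, C_λ)` is
an attractor–repeller decomposition of `A_λ`. -/
theorem polar_attractor_repeller_decomposition {n : ℕ}
    (φ : ℝ → EuclideanSpace ℝ (Fin n) → ℝ → EuclideanSpace ℝ (Fin n))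
    (hφ : IsParamFlow φ)
    (hdiss : ∀ l ∈ Icc (0 : ℝ) 1, Dissipative (φ l))
    (hpolar : PolarFamily φ)
    (lam1 : ℝ) (hlam1 : lam1 ∈ Ioc (0 : ℝ) 1)
    (K : ℝ → Set (EuclideanSpace ℝ (Fin n)))
    (hcont : IsContinuation φ (Icc 0 lam1) K)
    (hK0 : IsGlobalAttractor (φ 0) (K 0))
    (A : ℝ → Set (EuclideanSpace ℝ (Fin n)))
    (hA : ∀ l ∈ Icc (0 : ℝ) 1, IsGlobalAttractor (φ l) (A l)) :
    ∃ lam0, 0 < lam0 ∧ lam0 ≤ lam1 ∧ ∀ l, 0 < l → l < lam0 →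
      K l ⊂ A l ∧ IsAttractor (φ l) (K l) ∧
      ∃ C : Set (EuclideanSpace ℝ (Fin n)),
        IsCompact C ∧ FlowInvariant (φ l) C ∧ C ⊆ (K l)ᶜ ∧
        (∀ S : Set (EuclideanSpace ℝ (Fin n)),
          IsCompact S → FlowInvariant (φ l) S → S ⊆ (K l)ᶜ → S ⊆ C) ∧
        C.Nonempty ∧ C ⊆ A l ∧
        ∀ x ∈ A l, x ∉ K l ∪ C →
          omegaLimitSet (φ l) x ⊆ K l ∧ negOmegaLimitSet (φ l) x ⊆ C :=
  polar_attractor_repeller_decomposition_general φ hφ hpolar lam1 hlam1 K hcont hK0 A hA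
end
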